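/- arXiv:2510.12558 — 14 statements merged into one kernel-verified Lean document; each statement's English description precedes it below -/
import Mathlib

section
/- Let c be a real number and let x₁, x₂, x₃ be real numbers (not necessarily distinct) satisfying x₂ = x₁² + c, x₃ = x₂² + c and x₁ = x₃² + c. Then, with s₁ = x₁ + x₂ + x₃, one has (s₁² − 3s₁ + 9c)·(s₁² + s₁ + c + 2) = 0. -/
theorem stmt_3 (c x₁ x₂ x₃ : ℝ)
    (h₁ : x₂ = x₁ ^ 2 + c) (h₂ : x₃ = x₂ ^ 2 + c) (h₃ : x₁ = x₃ ^ 2 + c) :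
    ((x₁ + x₂ + x₃) ^ 2 - 3 * (x₁ + x₂ + x₃) + 9 * c) *
      ((x₁ + x₂ + x₃) ^ 2 + (x₁ + x₂ + x₃) + c + 2) = 0 := by
  subst h₂ h₁
  linear_combination (-(6 + 5*c + 9*c^2 + 6*c^3 + c^4 + 7*x₁ + 16*x₁*c + 4*x₁*c^2
    + 4*x₁^2 + 12*x₁^2*c + 16*x₁^2*c^2 + 4*x₁^2*c^3 + 12*x₁^3 + 8*x₁^3*c
    + 4*x₁^4 + 14*x₁^4*c + 6*x₁^4*c^2 + 4*x₁^5 + 4*x₁^6 + 4*x₁^6*c + x₁^8)) * h₃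
end

section
/- Let c be a real number. If (x₁, x₂, x₃) is a 3-cycle of the quadratic map f_c(x) = x² + c, then s₁ = x₁ + x₂ + x₃ satisfies s₁² + s₁ + c + 2 = 0; in particular c ≤ −7/4. -/
theorem stmt_4 (c x₁ x₂ x₃ : ℝ)
    (hne₁₂ : x₁ ≠ x₂) (hne₂₃ : x₂ ≠ x₃) (hne₁₃ : x₁ ≠ x₃)
    (h₁ : x₁ ^ 2 + c = x₂) (h₂ : x₂ ^ 2 + c = x₃) (h₃ : x₃ ^ 2 + c = x₁) :
    (x₁ + x₂ + x₃) ^ 2 + (x₁ + x₂ + x₃) + c + 2 = 0 ∧ c ≤ -7 / 4 := by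
  subst h₁ h₂
  have hd : x₁ ^ 2 + c - x₁ ≠ 0 := fun h => hne₁₂ (by linarith)
  have hg : x₁ ^ 6 + x₁ ^ 5 + (3 * c + 1) * x₁ ^ 4 + (2 * c + 1) * x₁ ^ 3
      + (3 * c ^ 2 + 3 * c + 1) * x₁ ^ 2 + (c ^ 2 + 2 * c + 1) * x₁
      + (c ^ 3 + 2 * c ^ 2 + c + 1) = 0 := by
    have h : (x₁ ^ 2 + c - x₁) * (x₁ ^ 6 + x₁ ^ 5 + (3 * c + 1) * x₁ ^ 4
        + (2 * c + 1) * x₁ ^ 3 + (3 * c ^ 2 + 3 * c + 1) * x₁ ^ 2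
        + (c ^ 2 + 2 * c + 1) * x₁ + (c ^ 3 + 2 * c ^ 2 + c + 1)) = 0 := by
      linear_combination h₃
    exact (mul_eq_zero.mp h).resolve_left hd
  have key : (x₁ + (x₁ ^ 2 + c) + ((x₁ ^ 2 + c) ^ 2 + c)) ^ 2
      + (x₁ + (x₁ ^ 2 + c) + ((x₁ ^ 2 + c) ^ 2 + c)) + c + 2 = 0 := by
    linear_combination (x₁ ^ 2 - x₁ + c + 2) * hg
  refine ⟨key, ?_⟩
  nlinarith [sq_nonneg (x₁ + (x₁ ^ 2 + c) + ((x₁ ^ 2 + c) ^ 2 + c) + 1 / 2)]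
end

section
/- Let c be a real number with c > −7/4. Then the quadratic map f_c(x) = x² + c has no 3-cycle, i.e., there are no pairwise distinct real numbers x₁, x₂, x₃ with f_c(x₁) = x₂, f_c(x₂) = x₃ and f_c(x₃) = x₁. -/
private lemma key_pos (c x : ℝ) (hc : c > -7 / 4) :
    0 < x^6 + x^5 + (3*c+1)*x^4 + (2*c+1)*x^3 + (3*c^2+3*c+1)*x^2
      + (c^2+2*c+1)*x + (c^3+2*c^2+c+1) := by
  set t : ℝ := c + 7/4 with ht_def
  have ht : 0 < t := by simp [ht_def]; linarith
  have hr0 : (0:ℝ) < x^4 + 37/20*x^3 - 103/40*x^2 - 253/80*x + 493/160 := by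
    nlinarith [sq_nonneg (x^2 + 37/40*x - 21981/12800), sq_nonneg (x/16 + 3697/32000)]
  have hc' : c = t - 7/4 := by ring
  rw [show c = t - 7/4 from hc']
  rcases le_or_gt 0 (2*x^2 + 37/20*x - 5489/1600) with hB | hB
  · nlinarith [sq_nonneg (x^3 + x^2/2 - 9/4*x - 1/8 + t*x - 17/40*t),
      mul_pos ht hr0, mul_nonneg (mul_pos ht ht).le hB, mul_pos ht (mul_pos ht ht)]
  · have hS : (0:ℝ) < 693/64000*x + 1422879/10240000 := by nlinarith [hB]
    nlinarith [sq_nonneg (x^3 + x^2/2 - 9/4*x - 1/8 + t*x - 17/40*t),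
      mul_nonneg ht.le (sq_nonneg (t + (2*x^2 + 37/20*x - 5489/1600)/2)),
      mul_pos ht hS]

theorem stmt_5 (c : ℝ) (hc : c > -7 / 4) :
    ¬ ∃ x₁ x₂ x₃ : ℝ, x₁ ≠ x₂ ∧ x₂ ≠ x₃ ∧ x₁ ≠ x₃ ∧
      x₁ ^ 2 + c = x₂ ∧ x₂ ^ 2 + c = x₃ ∧ x₃ ^ 2 + c = x₁ := by
  rintro ⟨x₁, x₂, x₃, h12, h23, h13, e1, e2, e3⟩
  subst e1; subst e2
  have hne : x₁ ^ 2 + c - x₁ ≠ 0 := by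
    intro h
    exact h12 (by linarith [sub_eq_zero.mp h])
  have hg : (x₁^6 + x₁^5 + (3*c+1)*x₁^4 + (2*c+1)*x₁^3 + (3*c^2+3*c+1)*x₁^2
      + (c^2+2*c+1)*x₁ + (c^3+2*c^2+c+1)) * (x₁ ^ 2 + c - x₁) = 0 := by
    linear_combination e3
  have := key_pos c x₁ hc
  rcases mul_eq_zero.mp hg with h | h
  · linarith
  · exact hne h
end

section
/- Let c be a real number and let x₁, x₂, x₃ be real numbers satisfying x₂ = x₁² + c, x₃ = x₂² + c and x₁ = x₃² + c. If s₁ = x₁ + x₂ + x₃ satisfies s₁² − 3s₁ + 9c = 0, then x₁ = x₂ = x₃, and this common value is a fixed point of f_c, i.e., it equals (1 − √(1−4c))/2 or (1 + √(1−4c))/2. -/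
theorem stmt_6 (c x₁ x₂ x₃ : ℝ)
    (h₁ : x₂ = x₁ ^ 2 + c) (h₂ : x₃ = x₂ ^ 2 + c) (h₃ : x₁ = x₃ ^ 2 + c)
    (hs : (x₁ + x₂ + x₃) ^ 2 - 3 * (x₁ + x₂ + x₃) + 9 * c = 0) :
    x₁ = x₂ ∧ x₂ = x₃ ∧
      (x₁ = (1 - Real.sqrt (1 - 4 * c)) / 2 ∨ x₁ = (1 + Real.sqrt (1 - 4 * c)) / 2) := by
  have key : (x₁ - x₂) ^ 2 + (x₂ - x₃) ^ 2 + (x₃ - x₁) ^ 2 = 0 := by nlinarith [h₁, h₂, h₃, hs]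
  have e12 : x₁ = x₂ := by nlinarith [sq_nonneg (x₂ - x₃), sq_nonneg (x₃ - x₁), sq_nonneg (x₁ - x₂)]
  have e23 : x₂ = x₃ := by nlinarith [sq_nonneg (x₂ - x₃), sq_nonneg (x₃ - x₁), sq_nonneg (x₁ - x₂)]
  refine ⟨e12, e23, ?_⟩
  have hfix : x₁ = x₁ ^ 2 + c := by rw [e12] at h₁; linarith [h₁]
  have hd : (2 * x₁ - 1) ^ 2 = 1 - 4 * c := by nlinarith [hfix]
  have hsqrt : Real.sqrt (1 - 4 * c) = |2 * x₁ - 1| := by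
    rw [← hd, Real.sqrt_sq_eq_abs]
  rcases le_or_gt (1/2 : ℝ) x₁ with h | h
  · right
    rw [hsqrt, abs_of_nonneg (by linarith)]; ring
  · left
    rw [hsqrt, abs_of_neg (by linarith)]; ring
end

section
/- Let c ≤ −7/4 be a real number. Then both quantities 16c² − 4c − 7 − 8c·√(−4c−7) and 16c² − 4c − 7 + 8c·√(−4c−7) are positive. (These are the discriminants of the two cubic polynomials whose roots are the components of the candidate 3-cycles of f_c.) -/
theorem stmt_7 (c : ℝ) (hc : c ≤ -7 / 4) :
    0 < 16 * c ^ 2 - 4 * c - 7 - 8 * c * Real.sqrt (-4 * c - 7) ∧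
    0 < 16 * c ^ 2 - 4 * c - 7 + 8 * c * Real.sqrt (-4 * c - 7) := by
  set s := Real.sqrt (-4 * c - 7) with hs
  have hnn : (0:ℝ) ≤ -4 * c - 7 := by linarith
  have hsq : s ^ 2 = -4 * c - 7 := Real.sq_sqrt hnn
  have hs0 : 0 ≤ s := Real.sqrt_nonneg _
  have hc0 : 4 * c < 0 := by linarith
  constructor
  · have h1 : 4 * c - s ≠ 0 := by nlinarith
    nlinarith [sq_pos_of_ne_zero h1]
  · have h2 : 4 * c + s ≠ 0 := by
      intro h
      have : s = -(4 * c) := by linarith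
      nlinarith
    nlinarith [sq_pos_of_ne_zero h2]
end

section
/- Let c ≤ −7/4 be a real number. Then the cubic polynomial x³ − ((−1+√(−4c−7))/2)·x² + ((2c−1−√(−4c−7))/2)·x − ((c+2+c·√(−4c−7))/2) has three distinct real roots x₁, x₂, x₃, and these roots can be ordered so that (x₁, x₂, x₃) is a 3-cycle of the quadratic map f_c(x) = x² + c. In particular, for every c ≤ −7/4 the map f_c has a 3-cycle. -/
/-- The cubic whose roots form the 3-cycle. -/
private noncomputable def PP (c s x : ℝ) : ℝ :=
  x ^ 3 - ((-1 + s) / 2) * x ^ 2 + ((2 * c - 1 - s) / 2) * x - ((c + 2 + c * s) / 2)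

private lemma keyid (c s x : ℝ) (hs : s ^ 2 = -4 * c - 7) :
    PP c s (x ^ 2 + c) =
      PP c s x * (x ^ 3 + ((s - 1) / 2) * x ^ 2 + (c - (1 + s) / 2) * x
        + (1 + c / 2 + c * s / 2)) := by
  unfold PP
  linear_combination (x ^ 4 / 4 - x ^ 2 / 4 + c * x ^ 2 / 2 + c ^ 2 / 4) * hs

private lemma fixednot (c s x : ℝ) (hs : s ^ 2 = -4 * c - 7) (hs0 : 0 ≤ s)
    (hc : c ≤ -7 / 4) (hP : PP c s x = 0) (hfix : x ^ 2 + c = x) : False := by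
  unfold PP at hP
  have h1 : (1 - s) * x = 2 * c + 1 := by
    linear_combination hP - (3 / 2 + x - s / 2) * hfix
  have h4 : s = 4 * c := by
    linear_combination (1 - s) ^ 2 * hfix - ((1 - s) * x + 2 * c + 1 - (1 - s)) * h1 - c * hs
  linarith

private lemma twonot (c s x : ℝ) (hs : s ^ 2 = -4 * c - 7)
    (hP : PP c s x = 0) (hquad : x ^ 2 + x + c + 1 = 0) : False := by
  unfold PP at hP
  have h2 : x = (s - 1) / 2 := by
    linear_combination -hP + (x - 1 / 2 - s / 2) * hquad
  have h0 : (0 : ℝ) = 1 := by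
    linear_combination hquad - (x + (s - 1) / 2 + 1) * h2 - (1 / 4) * hs
  exact zero_ne_one h0

private lemma cubic_pos (a b d M : ℝ) (hM : 1 + |a| + |b| + |d| ≤ M) :
    0 < M ^ 3 - a * M ^ 2 + b * M - d := by
  have hM1 : 1 ≤ M := by
    have := abs_nonneg a; have := abs_nonneg b; have := abs_nonneg d
    linarith
  have hM0 : (0 : ℝ) ≤ M := by linarith
  have t1 : 0 ≤ (|a| - a) * M ^ 2 :=
    mul_nonneg (by linarith [le_abs_self a]) (sq_nonneg M)
  have t2 : 0 ≤ (|b| + b) * M := mul_nonneg (by linarith [neg_abs_le b]) hM0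
  have t3 : 0 ≤ |d| - d := by linarith [le_abs_self d]
  have t4 : 0 ≤ |b| * (M ^ 2 - M) :=
    mul_nonneg (abs_nonneg b) (by nlinarith)
  have t5 : 0 ≤ |d| * (M ^ 2 - 1) :=
    mul_nonneg (abs_nonneg d) (by nlinarith)
  have t6 : 0 ≤ (M - 1 - |a| - |b| - |d|) * M ^ 2 :=
    mul_nonneg (by linarith) (sq_nonneg M)
  have t7 : (1 : ℝ) ≤ M ^ 2 := by nlinarith
  nlinarith [t1, t2, t3, t4, t5, t6, t7]

theorem stmt_8 (c : ℝ) (hc : c ≤ -7 / 4) :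
    ∃ x₁ x₂ x₃ : ℝ, x₁ ≠ x₂ ∧ x₂ ≠ x₃ ∧ x₁ ≠ x₃ ∧
      (∀ x : ℝ,
        x ^ 3 - ((-1 + Real.sqrt (-4 * c - 7)) / 2) * x ^ 2
          + ((2 * c - 1 - Real.sqrt (-4 * c - 7)) / 2) * x
          - ((c + 2 + c * Real.sqrt (-4 * c - 7)) / 2) = 0
        ↔ x = x₁ ∨ x = x₂ ∨ x = x₃) ∧
      x₁ ^ 2 + c = x₂ ∧ x₂ ^ 2 + c = x₃ ∧ x₃ ^ 2 + c = x₁ := by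
  set s : ℝ := Real.sqrt (-4 * c - 7) with hsdef
  have hs0 : 0 ≤ s := Real.sqrt_nonneg _
  have hs : s ^ 2 = -4 * c - 7 := by
    rw [hsdef, sq, Real.mul_self_sqrt (by linarith)]
  -- find a real root of the cubic by the intermediate value theorem
  have hcont : Continuous (fun x : ℝ => PP c s x) := by
    unfold PP; fun_prop
  set M : ℝ := 1 + |(-1 + s) / 2| + |(2 * c - 1 - s) / 2| + |(c + 2 + c * s) / 2| with hMdef
  have hMle : 1 + |(-1 + s) / 2| + |(2 * c - 1 - s) / 2| + |(c + 2 + c * s) / 2| ≤ M :=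
    le_of_eq hMdef.symm
  have hgM : 0 < PP c s M := by
    have := cubic_pos ((-1 + s) / 2) ((2 * c - 1 - s) / 2) ((c + 2 + c * s) / 2) M hMle
    unfold PP; linarith
  have hgM' : PP c s (-M) < 0 := by
    have h := cubic_pos (-((-1 + s) / 2)) ((2 * c - 1 - s) / 2) (-((c + 2 + c * s) / 2)) M
      (by simp only [abs_neg]; exact hMle)
    unfold PP; nlinarith [h]
  have hMM : -M ≤ M := by
    have : (0:ℝ) < M ^ 3 - ((-1 + s) / 2) * M ^ 2 + ((2 * c - 1 - s) / 2) * M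
      - ((c + 2 + c * s) / 2) := hgM
    have h1 := abs_nonneg ((-1 + s) / 2)
    have h2 := abs_nonneg ((2 * c - 1 - s) / 2)
    have h3 := abs_nonneg ((c + 2 + c * s) / 2)
    rw [hMdef]; linarith
  obtain ⟨x₁, -, hP1'⟩ := intermediate_value_Icc hMM hcont.continuousOn
    (Set.mem_Icc.mpr ⟨le_of_lt hgM', le_of_lt hgM⟩)
  have hP1 : PP c s x₁ = 0 := hP1'
  set x₂ : ℝ := x₁ ^ 2 + c with hx2
  set x₃ : ℝ := x₂ ^ 2 + c with hx3
  have hP2 : PP c s x₂ = 0 := by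
    rw [hx2, keyid c s x₁ hs, hP1, zero_mul]
  have hP3 : PP c s x₃ = 0 := by
    rw [hx3, keyid c s x₂ hs, hP2, zero_mul]
  have h12 : x₁ ≠ x₂ := by
    intro h
    exact fixednot c s x₁ hs hs0 hc hP1 (by rw [← hx2]; exact h.symm)
  have h23 : x₂ ≠ x₃ := by
    intro h
    exact fixednot c s x₂ hs hs0 hc hP2 (by rw [← hx3]; exact h.symm)
  have h13 : x₁ ≠ x₃ := by
    intro h
    have hcyc : (x₁ ^ 2 + c) ^ 2 + c = x₁ := by
      rw [← hx2, ← hx3]; exact h.symm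
    have hsplit : (x₁ ^ 2 + c - x₁) * (x₁ ^ 2 + x₁ + c + 1) = 0 := by
      linear_combination hcyc
    rcases mul_eq_zero.mp hsplit with h' | h'
    · exact fixednot c s x₁ hs hs0 hc hP1 (by linarith)
    · exact twonot c s x₁ hs hP1 h'
  unfold PP at hP1 hP2 hP3
  have r12 : x₁ ^ 2 + x₁ * x₂ + x₂ ^ 2 - ((-1 + s) / 2) * (x₁ + x₂) + (2 * c - 1 - s) / 2
      = 0 := by
    apply mul_left_cancel₀ (sub_ne_zero.mpr h12)
    linear_combination hP1 - hP2
  have r13 : x₁ ^ 2 + x₁ * x₃ + x₃ ^ 2 - ((-1 + s) / 2) * (x₁ + x₃) + (2 * c - 1 - s) / 2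
      = 0 := by
    apply mul_left_cancel₀ (sub_ne_zero.mpr h13)
    linear_combination hP1 - hP3
  have he1 : x₁ + x₂ + x₃ = (-1 + s) / 2 := by
    apply mul_left_cancel₀ (sub_ne_zero.mpr h23)
    linear_combination r12 - r13
  have he2 : x₁ * x₂ + x₁ * x₃ + x₂ * x₃ = (2 * c - 1 - s) / 2 := by
    linear_combination -r12 + (x₁ + x₂) * he1
  have he3 : x₁ * x₂ * x₃ = (c + 2 + c * s) / 2 := by
    linear_combination hP1 - x₁ ^ 2 * he1 + x₁ * he2
  have hfact : ∀ x : ℝ,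
      x ^ 3 - ((-1 + s) / 2) * x ^ 2 + ((2 * c - 1 - s) / 2) * x - ((c + 2 + c * s) / 2)
        = (x - x₁) * ((x - x₂) * (x - x₃)) := by
    intro x
    linear_combination x ^ 2 * he1 - x * he2 + he3
  have hiff : ∀ x : ℝ,
      x ^ 3 - ((-1 + s) / 2) * x ^ 2 + ((2 * c - 1 - s) / 2) * x - ((c + 2 + c * s) / 2) = 0
        ↔ x = x₁ ∨ x = x₂ ∨ x = x₃ := by
    intro x
    rw [hfact x, mul_eq_zero, mul_eq_zero, sub_eq_zero, sub_eq_zero, sub_eq_zero]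
  have hfinal : x₃ ^ 2 + c = x₁ := by
    linear_combination (1 / 4) * hs + (x₁ + x₂ + x₃ + (-1 + s) / 2 - 1) * he1 - 2 * he2
      - hx2.symm - hx3.symm
  exact ⟨x₁, x₂, x₃, h12, h23, h13, hiff, hx2.symm, hx3.symm, hfinal⟩
end

section
/- Let c < −7/4 be a real number. Then the cubic polynomial x³ − ((−1−√(−4c−7))/2)·x² + ((2c−1+√(−4c−7))/2)·x − ((c+2−c·√(−4c−7))/2) has three distinct real roots, and these roots can be ordered to form a 3-cycle of f_c; moreover its root set is disjoint from the root set of the cubic x³ − ((−1+√(−4c−7))/2)·x² + ((2c−1−√(−4c−7))/2)·x − ((c+2+c·√(−4c−7))/2), so f_c has two 3-cycles with disjoint underlying sets. -/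
lemma cubic_pos_at (a b d x : ℝ) (ha : |a| ≤ x - 1) (hb : |b| ≤ x - 1)
    (hd : |d| ≤ x - 1) (hx : 1 ≤ x) : 0 < x ^ 3 + a * x ^ 2 + b * x + d := by
  have h1 : -(x - 1) * x ^ 2 ≤ a * x ^ 2 :=
    mul_le_mul_of_nonneg_right (by linarith [neg_abs_le a]) (sq_nonneg x)
  have h2 : -(x - 1) * x ≤ b * x :=
    mul_le_mul_of_nonneg_right (by linarith [neg_abs_le b]) (by linarith)
  have h3 : -(x - 1) ≤ d := by linarith [neg_abs_le d]
  nlinarith [h1, h2, h3]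

lemma cubic_root (a b d : ℝ) : ∃ x : ℝ, x ^ 3 + a * x ^ 2 + b * x + d = 0 := by
  set M : ℝ := 1 + |a| + |b| + |d| with hM
  have ha := abs_nonneg a
  have hb := abs_nonneg b
  have hd := abs_nonneg d
  have hM1 : 1 ≤ M := by simp only [hM]; linarith
  have hpos : 0 < M ^ 3 + a * M ^ 2 + b * M + d :=
    cubic_pos_at a b d M (by simp only [hM]; linarith) (by simp only [hM]; linarith)
      (by simp only [hM]; linarith) hM1
  have hneg : (-M) ^ 3 + a * (-M) ^ 2 + b * (-M) + d < 0 := by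
    have := cubic_pos_at (-a) b (-d) M (by rw [abs_neg]; simp only [hM]; linarith)
      (by simp only [hM]; linarith) (by rw [abs_neg]; simp only [hM]; linarith) hM1
    nlinarith [this]
  have hcont : ContinuousOn (fun x : ℝ => x ^ 3 + a * x ^ 2 + b * x + d) (Set.Icc (-M) M) := by
    fun_prop
  have hle : (-M : ℝ) ≤ M := by linarith
  have := intermediate_value_Icc hle hcont
  have h0 : (0 : ℝ) ∈ Set.Icc ((-M) ^ 3 + a * (-M) ^ 2 + b * (-M) + d)
      (M ^ 3 + a * M ^ 2 + b * M + d) := ⟨le_of_lt hneg, le_of_lt hpos⟩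
  obtain ⟨x, _, hx⟩ := this h0
  exact ⟨x, hx⟩

theorem stmt_9 (c : ℝ) (hc : c < -7 / 4) :
    (∃ x₁ x₂ x₃ : ℝ, x₁ ≠ x₂ ∧ x₂ ≠ x₃ ∧ x₁ ≠ x₃ ∧
      (∀ x : ℝ,
        x ^ 3 - ((-1 - Real.sqrt (-4 * c - 7)) / 2) * x ^ 2
          + ((2 * c - 1 + Real.sqrt (-4 * c - 7)) / 2) * x
          - ((c + 2 - c * Real.sqrt (-4 * c - 7)) / 2) = 0
        ↔ x = x₁ ∨ x = x₂ ∨ x = x₃) ∧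
      x₁ ^ 2 + c = x₂ ∧ x₂ ^ 2 + c = x₃ ∧ x₃ ^ 2 + c = x₁) ∧
    (∀ x : ℝ,
      x ^ 3 - ((-1 - Real.sqrt (-4 * c - 7)) / 2) * x ^ 2
        + ((2 * c - 1 + Real.sqrt (-4 * c - 7)) / 2) * x
        - ((c + 2 - c * Real.sqrt (-4 * c - 7)) / 2) = 0 →
      x ^ 3 - ((-1 + Real.sqrt (-4 * c - 7)) / 2) * x ^ 2
        + ((2 * c - 1 - Real.sqrt (-4 * c - 7)) / 2) * x
        - ((c + 2 + c * Real.sqrt (-4 * c - 7)) / 2) ≠ 0) := by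
  have h7 : (0 : ℝ) < -4 * c - 7 := by linarith
  set s : ℝ := Real.sqrt (-4 * c - 7) with hsdef
  have hs0 : 0 < s := Real.sqrt_pos.mpr h7
  have hs2 : s ^ 2 = -4 * c - 7 := Real.sq_sqrt (le_of_lt h7)
  -- no root of P is a fixed point of f
  have nofix : ∀ x : ℝ,
      x ^ 3 - ((-1 - s) / 2) * x ^ 2 + ((2 * c - 1 + s) / 2) * x - ((c + 2 - c * s) / 2) = 0 →
      x ^ 2 + c ≠ x := by
    intro x hp hfix
    have hx : (1 + s) * x = 2 * c + 1 := by
      linear_combination hp - (x + 3 / 2 + s / 2) * hfix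
    have hs4 : s = -4 * c := by
      linear_combination (-(1 + s) ^ 2) * hfix + ((1 + s) * x + 2 * c + 1 - (1 + s)) * hx + c * hs2
    have h16 : 16 * c ^ 2 = -4 * c - 7 := by
      linear_combination hs2 - (s - 4 * c) * hs4
    nlinarith [sq_nonneg (8 * c + 1), h16]
  -- no root of P satisfies x^2 + x + c + 1 = 0
  have no2 : ∀ x : ℝ,
      x ^ 3 - ((-1 - s) / 2) * x ^ 2 + ((2 * c - 1 + s) / 2) * x - ((c + 2 - c * s) / 2) = 0 →
      x ^ 2 + x + c + 1 ≠ 0 := by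
    intro x hp h2
    have hx2 : 2 * x = -(1 + s) := by
      linear_combination (-2) * hp + 2 * (x - 1 / 2 + s / 2) * h2
    have : (0 : ℝ) = -1 := by
      linear_combination -h2 + ((x - (1 + s) / 2 + 1) / 2) * hx2 + (1 / 4) * hs2
    norm_num at this
  -- a root of P
  obtain ⟨x1, hx1⟩ := cubic_root (-((-1 - s) / 2)) ((2 * c - 1 + s) / 2) (-((c + 2 - c * s) / 2))
  have hp1 : x1 ^ 3 - ((-1 - s) / 2) * x1 ^ 2 + ((2 * c - 1 + s) / 2) * x1
      - ((c + 2 - c * s) / 2) = 0 := by linear_combination hx1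
  set x2 : ℝ := x1 ^ 2 + c with hx2def
  set x3 : ℝ := x2 ^ 2 + c with hx3def
  have hp2 : x2 ^ 3 - ((-1 - s) / 2) * x2 ^ 2 + ((2 * c - 1 + s) / 2) * x2
      - ((c + 2 - c * s) / 2) = 0 := by
    rw [hx2def]
    linear_combination (x1 ^ 3 + ((-1 - s) / 2) * x1 ^ 2 + ((2 * c - 1 + s) / 2) * x1
      + (c + 2 - c * s) / 2) * hp1 + (((x1 ^ 2 + c) ^ 2 - x1 ^ 2) / 4) * hs2
  have hp3 : x3 ^ 3 - ((-1 - s) / 2) * x3 ^ 2 + ((2 * c - 1 + s) / 2) * x3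
      - ((c + 2 - c * s) / 2) = 0 := by
    rw [hx3def]
    linear_combination (x2 ^ 3 + ((-1 - s) / 2) * x2 ^ 2 + ((2 * c - 1 + s) / 2) * x2
      + (c + 2 - c * s) / 2) * hp2 + (((x2 ^ 2 + c) ^ 2 - x2 ^ 2) / 4) * hs2
  have ne12 : x1 ≠ x2 := fun h => nofix x1 hp1 (by rw [hx2def] at h; linear_combination -h)
  have ne23 : x2 ≠ x3 := fun h => nofix x2 hp2 (by rw [hx3def] at h; linear_combination -h)
  have ne13 : x1 ≠ x3 := by
    intro h
    have hfac : (x1 ^ 2 - x1 + c) * (x1 ^ 2 + x1 + c + 1) = 0 := by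
      rw [hx3def, hx2def] at h
      linear_combination -h
    rcases mul_eq_zero.mp hfac with hA | hB
    · exact nofix x1 hp1 (by linear_combination hA)
    · exact no2 x1 hp1 hB
  -- Vieta
  have h12 : (x1 - x2) * (x1 ^ 2 + x1 * x2 + x2 ^ 2 - ((-1 - s) / 2) * (x1 + x2)
      + (2 * c - 1 + s) / 2) = 0 := by linear_combination hp1 - hp2
  have g12 := (mul_eq_zero.mp h12).resolve_left (sub_ne_zero.mpr ne12)
  have h23 : (x2 - x3) * (x2 ^ 2 + x2 * x3 + x3 ^ 2 - ((-1 - s) / 2) * (x2 + x3)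
      + (2 * c - 1 + s) / 2) = 0 := by linear_combination hp2 - hp3
  have g23 := (mul_eq_zero.mp h23).resolve_left (sub_ne_zero.mpr ne23)
  have hsum : x1 + x2 + x3 = (-1 - s) / 2 := by
    have h' : (x1 - x3) * (x1 + x2 + x3 - (-1 - s) / 2) = 0 := by
      linear_combination g12 - g23
    have := (mul_eq_zero.mp h').resolve_left (sub_ne_zero.mpr ne13)
    linear_combination this
  have he2 : x1 * x2 + x1 * x3 + x2 * x3 = (2 * c - 1 + s) / 2 := by
    linear_combination (x1 + x2) * hsum - g12
  have he3 : x1 * x2 * x3 = (c + 2 - c * s) / 2 := by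
    linear_combination hp1 - x1 ^ 2 * hsum + x1 * he2
  have hcyc : x3 ^ 2 + c = x1 := by
    linear_combination (x1 + x2 + x3 + (-1 - s) / 2 - 1) * hsum - 2 * he2 + (1 / 4) * hs2
      + hx2def + hx3def
  constructor
  · refine ⟨x1, x2, x3, ne12, ne23, ne13, ?_, hx2def.symm, hx3def.symm, hcyc⟩
    intro x
    constructor
    · intro h
      have h' : (x - x1) * ((x - x2) * (x - x3)) = 0 := by
        linear_combination h - x ^ 2 * hsum + x * he2 - he3
      rcases mul_eq_zero.mp h' with h1 | h'
      · exact Or.inl (sub_eq_zero.mp h1)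
      · rcases mul_eq_zero.mp h' with h2 | h3
        · exact Or.inr (Or.inl (sub_eq_zero.mp h2))
        · exact Or.inr (Or.inr (sub_eq_zero.mp h3))
    · rintro (rfl | rfl | rfl)
      · linear_combination hp1
      · linear_combination hp2
      · linear_combination hp3
  · intro x hp hpt
    have h5 : s * (x ^ 2 + x + c) = 0 := by linear_combination hp - hpt
    have hq : x ^ 2 + x + c = 0 := (mul_eq_zero.mp h5).resolve_left (ne_of_gt hs0)
    have : (0 : ℝ) = -1 := by linear_combination (x - 1 / 2 + s / 2) * hq - hp
    norm_num at this
end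

section
/- Let c < −7/4 be a real number. Then every 3-cycle (x₁, x₂, x₃) of f_c has underlying set {x₁, x₂, x₃} equal to the root set of one of the two cubics x³ − ((−1∓√(−4c−7))/2)·x² + ((2c−1±√(−4c−7))/2)·x − ((c+2∓c·√(−4c−7))/2); in particular, f_c has exactly two 3-cycles up to cyclic ordering. -/
lemma cubic_factor (S1 S2 S3 a b c : ℝ) (hab : a ≠ b) (hac : a ≠ c) (hbc : b ≠ c)
    (ha : a^3 - S1*a^2 + S2*a - S3 = 0) (hb : b^3 - S1*b^2 + S2*b - S3 = 0)
    (hc : c^3 - S1*c^2 + S2*c - S3 = 0) :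
    ∀ y : ℝ, y^3 - S1*y^2 + S2*y - S3 = (y-a)*(y-b)*(y-c) := by
  have q1 : a^2 + a*b + b^2 - S1*(a+b) + S2 = 0 := by
    have h : (a-b) * (a^2 + a*b + b^2 - S1*(a+b) + S2) = 0 := by linear_combination ha - hb
    exact (mul_eq_zero.mp h).resolve_left (sub_ne_zero.mpr hab)
  have q2 : a^2 + a*c + c^2 - S1*(a+c) + S2 = 0 := by
    have h : (a-c) * (a^2 + a*c + c^2 - S1*(a+c) + S2) = 0 := by linear_combination ha - hc
    exact (mul_eq_zero.mp h).resolve_left (sub_ne_zero.mpr hac)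
  have hS1 : S1 = a + b + c := by
    have h : (b-c) * (a+b+c-S1) = 0 := by linear_combination q1 - q2
    have := (mul_eq_zero.mp h).resolve_left (sub_ne_zero.mpr hbc)
    linarith
  have hS2 : S2 = a*b + a*c + b*c := by linear_combination q1 + (a+b)*hS1
  have hS3 : S3 = a*b*c := by linear_combination -ha - a^2*hS1 + a*hS2
  intro y
  linear_combination -y^2*hS1 + y*hS2 - hS3

lemma cubic_has_root (A B C : ℝ) : ∃ x : ℝ, x^3 + A*x^2 + B*x + C = 0 := by
  set g : ℝ → ℝ := fun x => x^3 + A*x^2 + B*x + C with hg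
  have hcont : Continuous g := by fun_prop
  set M : ℝ := 1 + |A| + |B| + |C| with hM
  have hM1 : 1 ≤ M := by
    have := abs_nonneg A; have := abs_nonneg B; have := abs_nonneg C; linarith
  have hA := neg_abs_le A; have hA' := le_abs_self A
  have hB := neg_abs_le B; have hB' := le_abs_self B
  have hC := neg_abs_le C; have hC' := le_abs_self C
  have hpos : 0 ≤ g M := by
    show (0:ℝ) ≤ M^3 + A*M^2 + B*M + C
    nlinarith [sq_nonneg M, sq_nonneg (M-1), abs_nonneg A, abs_nonneg B, abs_nonneg C,
      mul_le_mul_of_nonneg_right hA' (sq_nonneg M)]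
  have hneg : g (-M) ≤ 0 := by
    show (-M)^3 + A*(-M)^2 + B*(-M) + C ≤ 0
    nlinarith [sq_nonneg M, sq_nonneg (M-1), abs_nonneg A, abs_nonneg B, abs_nonneg C]
  have hsub := intermediate_value_Icc (by linarith : (-M : ℝ) ≤ M) hcont.continuousOn
  have h0 : (0:ℝ) ∈ Set.Icc (g (-M)) (g M) := ⟨hneg, hpos⟩
  obtain ⟨x, _, hx⟩ := hsub h0
  exact ⟨x, hx⟩

lemma noFixed (c t x : ℝ) (ht : t^2 = -4*c-7)
    (hp : x^3 - ((-1-t)/2)*x^2 + ((2*c-1+t)/2)*x - ((c+2-c*t)/2) = 0)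
    (hf : x^2 + c = x) : False := by
  have l1 : t*x = (1-x)*(2*x+1) := by
    linear_combination hp + (-x - t/2 + 1/2) * hf
  have key2 : 4*x^2 + 2*x + 1 = 0 := by
    linear_combination (2*x^2 - x*t - x - 1)*l1 + (-4*x^2)*hf + x^2*ht
  nlinarith [sq_nonneg (2*x + 1/2)]

lemma noPer2 (c t x : ℝ) (ht : t^2 = -4*c-7)
    (hp : x^3 - ((-1-t)/2)*x^2 + ((2*c-1+t)/2)*x - ((c+2-c*t)/2) = 0)
    (h2 : x^2 + x + c + 1 = 0) : False := by
  have : (0:ℝ) = -1 := by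
    linear_combination (-(x + (1-t)/2))*hp + (-(1 - (x + (1-t)/2)*(x + (t-1)/2)))*h2 + ((1/4:ℝ))*ht
  norm_num at this

lemma keyId (c t : ℝ) (ht : t^2 = -4*c-7) : ∀ y : ℝ,
    (y^2+c)^3 - ((-1-t)/2)*(y^2+c)^2 + ((2*c-1+t)/2)*(y^2+c) - ((c+2-c*t)/2)
      = (y^3 - ((-1-t)/2)*y^2 + ((2*c-1+t)/2)*y - ((c+2-c*t)/2))
        * (y^3 + ((-1-t)/2)*y^2 + ((2*c-1+t)/2)*y + ((c+2-c*t)/2)) := by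
  intro y
  linear_combination (((y^2+c)^2 - y^2)/4) * ht

lemma set_eq_of_factor (f : ℝ → ℝ) (a b c : ℝ)
    (h : ∀ y, f y = (y-a)*(y-b)*(y-c)) :
    ({a, b, c} : Set ℝ) = {x | f x = 0} := by
  ext y
  simp only [Set.mem_insert_iff, Set.mem_singleton_iff, Set.mem_setOf_eq, h y,
    mul_eq_zero, sub_eq_zero, or_assoc]

lemma exists_cycle (c t : ℝ) (ht : t^2 = -4*c-7) :
    ∃ x₁ x₂ x₃ : ℝ, x₁ ≠ x₂ ∧ x₂ ≠ x₃ ∧ x₁ ≠ x₃ ∧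
      x₁^2 + c = x₂ ∧ x₂^2 + c = x₃ ∧ x₃^2 + c = x₁ ∧
      ({x₁, x₂, x₃} : Set ℝ) =
        {x : ℝ | x^3 - ((-1-t)/2)*x^2 + ((2*c-1+t)/2)*x - ((c+2-c*t)/2) = 0} := by
  obtain ⟨u, hu⟩ := cubic_has_root (-((-1-t)/2)) ((2*c-1+t)/2) (-((c+2-c*t)/2))
  have hp1 : u^3 - ((-1-t)/2)*u^2 + ((2*c-1+t)/2)*u - ((c+2-c*t)/2) = 0 := by
    linear_combination hu
  set v : ℝ := u^2 + c with hv
  set w : ℝ := v^2 + c with hw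
  have hp2 : v^3 - ((-1-t)/2)*v^2 + ((2*c-1+t)/2)*v - ((c+2-c*t)/2) = 0 := by
    rw [hv, keyId c t ht u, hp1, zero_mul]
  have hp3 : w^3 - ((-1-t)/2)*w^2 + ((2*c-1+t)/2)*w - ((c+2-c*t)/2) = 0 := by
    rw [hw, keyId c t ht v, hp2, zero_mul]
  have hp4 : (w^2+c)^3 - ((-1-t)/2)*(w^2+c)^2 + ((2*c-1+t)/2)*(w^2+c) - ((c+2-c*t)/2) = 0 := by
    rw [keyId c t ht w, hp3, zero_mul]
  have d12 : u ≠ v := by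
    intro h
    exact noFixed c t u ht hp1 (by rw [← hv, ← h])
  have d23 : v ≠ w := by
    intro h
    exact noFixed c t v ht hp2 (by rw [← hw, ← h])
  have d13 : u ≠ w := by
    intro h
    have hz : (v - u) * (v + u + 1) = 0 := by
      have hww : w = v^2 + c := hw
      linear_combination -hww + hv - h
    have h2 : u^2 + u + c + 1 = 0 := by
      have := (mul_eq_zero.mp hz).resolve_left (sub_ne_zero.mpr (Ne.symm d12))
      linear_combination this - hv
    exact noPer2 c t u ht hp1 h2
  have hfac := cubic_factor ((-1-t)/2) ((2*c-1+t)/2) ((c+2-c*t)/2) u v w d12 d13 d23 hp1 hp2 hp3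
  have hroot : (w^2+c - u) * (w^2+c - v) * (w^2+c - w) = 0 := by
    rw [← hfac (w^2+c)]; exact hp4
  have hcyc : w^2 + c = u := by
    rcases mul_eq_zero.mp hroot with h | h
    · rcases mul_eq_zero.mp h with h | h
      · linarith [sub_eq_zero.mp h]
      · exfalso
        have hveq : w^2 + c = v := by linarith [sub_eq_zero.mp h]
        have hz : (w - v) * (w + v + 1) = 0 := by linear_combination hw + hveq
        have h2 : v^2 + v + c + 1 = 0 := by
          have := (mul_eq_zero.mp hz).resolve_left (sub_ne_zero.mpr (Ne.symm d23))
          linear_combination this - hw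
        exact noPer2 c t v ht hp2 h2
    · exfalso
      have : w^2 + c = w := by linarith [sub_eq_zero.mp h]
      exact noFixed c t w ht hp3 this
  exact ⟨u, v, w, d12, d23, d13, hv.symm, hw.symm, hcyc,
    set_eq_of_factor _ u v w (fun y => (hfac y).symm ▸ rfl)⟩

theorem stmt_10 (c : ℝ) (hc : c < -7 / 4) :
    (∀ x₁ x₂ x₃ : ℝ, x₁ ≠ x₂ → x₂ ≠ x₃ → x₁ ≠ x₃ →
      x₁ ^ 2 + c = x₂ → x₂ ^ 2 + c = x₃ → x₃ ^ 2 + c = x₁ →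
      ({x₁, x₂, x₃} : Set ℝ) =
          {x : ℝ | x ^ 3 - ((-1 - Real.sqrt (-4 * c - 7)) / 2) * x ^ 2
            + ((2 * c - 1 + Real.sqrt (-4 * c - 7)) / 2) * x
            - ((c + 2 - c * Real.sqrt (-4 * c - 7)) / 2) = 0} ∨
        ({x₁, x₂, x₃} : Set ℝ) =
          {x : ℝ | x ^ 3 - ((-1 + Real.sqrt (-4 * c - 7)) / 2) * x ^ 2
            + ((2 * c - 1 - Real.sqrt (-4 * c - 7)) / 2) * x
            - ((c + 2 + c * Real.sqrt (-4 * c - 7)) / 2) = 0}) ∧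
    (∃ x₁ x₂ x₃ : ℝ, x₁ ≠ x₂ ∧ x₂ ≠ x₃ ∧ x₁ ≠ x₃ ∧
      x₁ ^ 2 + c = x₂ ∧ x₂ ^ 2 + c = x₃ ∧ x₃ ^ 2 + c = x₁ ∧
      ({x₁, x₂, x₃} : Set ℝ) =
        {x : ℝ | x ^ 3 - ((-1 - Real.sqrt (-4 * c - 7)) / 2) * x ^ 2
          + ((2 * c - 1 + Real.sqrt (-4 * c - 7)) / 2) * x
          - ((c + 2 - c * Real.sqrt (-4 * c - 7)) / 2) = 0}) ∧
    (∃ x₁ x₂ x₃ : ℝ, x₁ ≠ x₂ ∧ x₂ ≠ x₃ ∧ x₁ ≠ x₃ ∧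
      x₁ ^ 2 + c = x₂ ∧ x₂ ^ 2 + c = x₃ ∧ x₃ ^ 2 + c = x₁ ∧
      ({x₁, x₂, x₃} : Set ℝ) =
        {x : ℝ | x ^ 3 - ((-1 + Real.sqrt (-4 * c - 7)) / 2) * x ^ 2
          + ((2 * c - 1 - Real.sqrt (-4 * c - 7)) / 2) * x
          - ((c + 2 + c * Real.sqrt (-4 * c - 7)) / 2) = 0}) ∧
    {x : ℝ | x ^ 3 - ((-1 - Real.sqrt (-4 * c - 7)) / 2) * x ^ 2
        + ((2 * c - 1 + Real.sqrt (-4 * c - 7)) / 2) * x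
        - ((c + 2 - c * Real.sqrt (-4 * c - 7)) / 2) = 0} ≠
      {x : ℝ | x ^ 3 - ((-1 + Real.sqrt (-4 * c - 7)) / 2) * x ^ 2
        + ((2 * c - 1 - Real.sqrt (-4 * c - 7)) / 2) * x
        - ((c + 2 + c * Real.sqrt (-4 * c - 7)) / 2) = 0} := by
  have hpos : (0:ℝ) < -4 * c - 7 := by linarith
  have hs : Real.sqrt (-4 * c - 7) ^ 2 = -4 * c - 7 := Real.sq_sqrt hpos.le
  have hsne : Real.sqrt (-4 * c - 7) ≠ 0 := ne_of_gt (Real.sqrt_pos.mpr hpos)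
  have hts : (-(Real.sqrt (-4 * c - 7)))^2 = -4*c-7 := by rw [neg_sq]; linarith [hs]
  refine ⟨?_, ?_, ?_, ?_⟩
  · -- classification
    intro x₁ x₂ x₃ d12 d23 d13 h1 h2 h3
    subst h1; subst h2
    set v : ℝ := x₁^2 + c with hv
    set w : ℝ := v^2 + c with hw
    have hD : (x₁ - v) * (v - w) * (w - x₁) ≠ 0 :=
      mul_ne_zero (mul_ne_zero (sub_ne_zero.mpr d12) (sub_ne_zero.mpr d23))
        (sub_ne_zero.mpr (Ne.symm d13))
    have hq' : ((x₁+v+w)^2 + (x₁+v+w) + c + 2) * ((x₁ - v) * (v - w) * (w - x₁)) = 0 := by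
      linear_combination (x₁ ^ 10 + -(x₁ ^ 9) + 5 * x₁ ^ 8 * c + x₁ ^ 8 + -4 * x₁ ^ 7 * c
        + 10 * x₁ ^ 6 * c ^ 2 + 6 * x₁ ^ 6 * c + -(x₁ ^ 6) + -6 * x₁ ^ 5 * c ^ 2
        + -2 * x₁ ^ 5 * c + -(x₁ ^ 5) + 10 * x₁ ^ 4 * c ^ 3 + 12 * x₁ ^ 4 * c ^ 2
        + -(x₁ ^ 4 * c) + -(x₁ ^ 4) + -4 * x₁ ^ 3 * c ^ 3 + -4 * x₁ ^ 3 * c ^ 2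
        + -2 * x₁ ^ 3 * c + 2 * x₁ ^ 3 + 5 * x₁ ^ 2 * c ^ 4 + 10 * x₁ ^ 2 * c ^ 3
        + 2 * x₁ ^ 2 * c ^ 2 + -2 * x₁ ^ 2 * c + -(x₁ * c ^ 4) + -2 * x₁ * c ^ 3
        + -2 * x₁ * c ^ 2 + c ^ 5 + 3 * c ^ 4 + 2 * c ^ 3) * h3
    have hq : (x₁+v+w)^2 + (x₁+v+w) + c + 2 = 0 :=
      (mul_eq_zero.mp hq').resolve_right hD
    have he3' : (x₁*v*w - c*(x₁+v+w) - c - 1) * ((x₁ - v) * (v - w) * (w - x₁)) = 0 := by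
      linear_combination (x₁ ^ 9 + -(x₁ ^ 8) + 4 * x₁ ^ 7 * c + -(x₁ ^ 7) + -4 * x₁ ^ 6 * c
        + 6 * x₁ ^ 5 * c ^ 2 + -(x₁ ^ 5 * c) + x₁ ^ 5 + -6 * x₁ ^ 4 * c ^ 2 + -(x₁ ^ 4 * c)
        + x₁ ^ 4 + 4 * x₁ ^ 3 * c ^ 3 + x₁ ^ 3 * c ^ 2 + x₁ ^ 3 * c + -(x₁ ^ 3)
        + -4 * x₁ ^ 2 * c ^ 3 + -2 * x₁ ^ 2 * c ^ 2 + x₁ ^ 2 * c + x₁ * c ^ 4 + x₁ * c ^ 3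
        + x₁ * c ^ 2 + -(c ^ 4) + -(c ^ 3)) * h3
    have he3 : x₁*v*w - c*(x₁+v+w) - c - 1 = 0 :=
      (mul_eq_zero.mp he3').resolve_right hD
    have hfact : (2*(x₁+v+w) + 1 - Real.sqrt (-4*c-7)) * (2*(x₁+v+w) + 1 + Real.sqrt (-4*c-7)) = 0 := by
      linear_combination 4*hq - hs
    rcases mul_eq_zero.mp hfact with h | h
    · -- sum = (-1 + s)/2, corresponds to t = -s : second cubic
      right
      have hE1 : x₁+v+w = (-1 - -Real.sqrt (-4*c-7))/2 := by linarith
      have he2 : x₁*v + x₁*w + v*w = (2*c - 1 + -Real.sqrt (-4*c-7))/2 := by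
        linear_combination (1/2 : ℝ)*hq - hE1 - (1/2 : ℝ)*h3
      have hv3 : x₁*v*w = (c + 2 - c * -Real.sqrt (-4*c-7))/2 := by
        linear_combination he3 + c*hE1
      exact set_eq_of_factor _ x₁ v w (fun y => by
        linear_combination y^2*hE1 - y*he2 + hv3)
    · -- sum = (-1 - s)/2 : first cubic
      left
      have hE1 : x₁+v+w = (-1 - Real.sqrt (-4*c-7))/2 := by linarith
      have he2 : x₁*v + x₁*w + v*w = (2*c - 1 + Real.sqrt (-4*c-7))/2 := by
        linear_combination (1/2 : ℝ)*hq - hE1 - (1/2 : ℝ)*h3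
      have hv3 : x₁*v*w = (c + 2 - c * Real.sqrt (-4*c-7))/2 := by
        linear_combination he3 + c*hE1
      exact set_eq_of_factor _ x₁ v w (fun y => by
        linear_combination y^2*hE1 - y*he2 + hv3)
  · exact exists_cycle c (Real.sqrt (-4*c-7)) hs
  · obtain ⟨a, b, d, h1, h2, h3, h4, h5, h6, hset⟩ :=
      exists_cycle c (-(Real.sqrt (-4*c-7))) hts
    refine ⟨a, b, d, h1, h2, h3, h4, h5, h6, hset.trans ?_⟩
    ext y
    simp only [Set.mem_setOf_eq]
    constructor <;> intro h <;> linear_combination h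
  · intro heq
    obtain ⟨a, b, d, h1, h2, h3, h4, h5, h6, hset⟩ :=
      exists_cycle c (Real.sqrt (-4*c-7)) hs
    have hmem : a ∈ ({a, b, d} : Set ℝ) := Set.mem_insert a _
    have hp1 : a^3 - ((-1-Real.sqrt (-4*c-7))/2)*a^2 + ((2*c-1+Real.sqrt (-4*c-7))/2)*a
        - ((c+2-c*Real.sqrt (-4*c-7))/2) = 0 := by
      have := hset ▸ hmem
      simpa [Set.mem_setOf_eq] using this
    have hmem2 : a ∈ {x : ℝ | x ^ 3 - ((-1 + Real.sqrt (-4 * c - 7)) / 2) * x ^ 2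
        + ((2 * c - 1 - Real.sqrt (-4 * c - 7)) / 2) * x
        - ((c + 2 + c * Real.sqrt (-4 * c - 7)) / 2) = 0} := by
      rw [← heq, ← hset]; exact hmem
    have hp2 : a ^ 3 - ((-1 + Real.sqrt (-4 * c - 7)) / 2) * a ^ 2
        + ((2 * c - 1 - Real.sqrt (-4 * c - 7)) / 2) * a
        - ((c + 2 + c * Real.sqrt (-4 * c - 7)) / 2) = 0 := hmem2
    have hqm : Real.sqrt (-4*c-7) * (a^2 + a + c) = 0 := by
      linear_combination hp1 - hp2
    have hquad : a^2 + a + c = 0 := by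
      rcases mul_eq_zero.mp hqm with h | h
      · exact absurd h hsne
      · exact h
    have : (0:ℝ) = -1 := by
      linear_combination -hp1 + (a + (Real.sqrt (-4*c-7) - 1)/2)*hquad
    norm_num at this
end

section
/- Let c = −7/4. Then a triple (x₁, x₂, x₃) of real numbers is a 3-cycle of f_c if and only if {x₁, x₂, x₃} is the set of roots of the cubic equation x³ + (1/2)x² − (9/4)x − 1/8 = 0 and the triple is ordered so that f_c(x₁) = x₂, f_c(x₂) = x₃, f_c(x₃) = x₁; this cubic has exactly three real roots, one in each of the intervals (−2, −1), (1, 2) and (−1/10, 0). In particular f_{−7/4} has exactly one 3-cycle up to cyclic ordering. -/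
private lemma no_common (x : ℝ) (hq : x ^ 3 + (1 / 2) * x ^ 2 - (9 / 4) * x - 1 / 8 = 0)
    (hf : x ^ 2 - x - 7 / 4 = 0) : False := by
  have : (7 : ℝ) = 0 := by
    linear_combination (7 / 2 - x) * hq + (x ^ 2 - 2 * x - 17 / 4) * hf
  norm_num at this

private lemma cycle_root (x₁ x₂ x₃ : ℝ) (h12 : x₁ ≠ x₂)
    (e1 : x₁ ^ 2 + (-7 / 4) = x₂) (e2 : x₂ ^ 2 + (-7 / 4) = x₃)
    (e3 : x₃ ^ 2 + (-7 / 4) = x₁) :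
    x₁ ^ 3 + (1 / 2) * x₁ ^ 2 - (9 / 4) * x₁ - 1 / 8 = 0 := by
  have hA : ((x₁ ^ 2 + (-7 / 4)) ^ 2 + (-7 / 4)) ^ 2 + (-7 / 4) = x₁ := by
    rw [e1, e2, e3]
  have h8 : (x₁ ^ 2 - x₁ - 7 / 4) *
      (x₁ ^ 3 + (1 / 2) * x₁ ^ 2 - (9 / 4) * x₁ - 1 / 8) ^ 2 = 0 := by
    linear_combination hA
  rcases mul_eq_zero.mp h8 with h | h
  · exfalso
    apply h12
    linear_combination e1 - h
  · exact pow_eq_zero_iff (by norm_num) |>.mp h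

/-- Vieta: three distinct roots of the monic cubic characterize all roots. -/
private lemma vieta (a b d : ℝ) (hab : a ≠ b) (had : a ≠ d) (hbd : b ≠ d)
    (pa : a ^ 3 + (1 / 2) * a ^ 2 - (9 / 4) * a - 1 / 8 = 0)
    (pb : b ^ 3 + (1 / 2) * b ^ 2 - (9 / 4) * b - 1 / 8 = 0)
    (pd : d ^ 3 + (1 / 2) * d ^ 2 - (9 / 4) * d - 1 / 8 = 0) :
    ∀ x : ℝ, x ^ 3 + (1 / 2) * x ^ 2 - (9 / 4) * x - 1 / 8 = 0 ↔
      x = a ∨ x = b ∨ x = d := by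
  have hab' : a - b ≠ 0 := sub_ne_zero.mpr hab
  have had' : a - d ≠ 0 := sub_ne_zero.mpr had
  have hbd' : b - d ≠ 0 := sub_ne_zero.mpr hbd
  have h1 : a ^ 2 + a * b + b ^ 2 + (a + b) / 2 - 9 / 4 = 0 := by
    apply mul_left_cancel₀ hab'
    linear_combination pa - pb
  have h2 : b ^ 2 + b * d + d ^ 2 + (b + d) / 2 - 9 / 4 = 0 := by
    apply mul_left_cancel₀ hbd'
    linear_combination pb - pd
  have hs : a + b + d = -(1 / 2) := by
    apply mul_left_cancel₀ had'
    linear_combination h1 - h2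
  have he2 : a * b + a * d + b * d = -(9 / 4) := by
    linear_combination -h1 + (a + b) * hs
  have he3 : a * b * d = 1 / 8 := by
    linear_combination pd + d * he2 - d ^ 2 * hs
  intro x
  have key : x ^ 3 + (1 / 2) * x ^ 2 - (9 / 4) * x - 1 / 8
      = (x - a) * ((x - b) * (x - d)) := by
    linear_combination x ^ 2 * hs - x * he2 + he3
  rw [key, mul_eq_zero, mul_eq_zero, sub_eq_zero, sub_eq_zero, sub_eq_zero]

theorem stmt_11 :
    (∃ a b d : ℝ, a ∈ Set.Ioo (-2 : ℝ) (-1) ∧ b ∈ Set.Ioo (1 : ℝ) 2 ∧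
      d ∈ Set.Ioo (-1 / 10 : ℝ) 0 ∧
      (∀ x : ℝ, x ^ 3 + (1 / 2) * x ^ 2 - (9 / 4) * x - 1 / 8 = 0 ↔
        x = a ∨ x = b ∨ x = d)) ∧
    (∀ x₁ x₂ x₃ : ℝ,
      (x₁ ≠ x₂ ∧ x₂ ≠ x₃ ∧ x₁ ≠ x₃ ∧
        x₁ ^ 2 + (-7 / 4) = x₂ ∧ x₂ ^ 2 + (-7 / 4) = x₃ ∧ x₃ ^ 2 + (-7 / 4) = x₁) ↔
      (({x₁, x₂, x₃} : Set ℝ) =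
          {x : ℝ | x ^ 3 + (1 / 2) * x ^ 2 - (9 / 4) * x - 1 / 8 = 0} ∧
        x₁ ^ 2 + (-7 / 4) = x₂ ∧ x₂ ^ 2 + (-7 / 4) = x₃ ∧ x₃ ^ 2 + (-7 / 4) = x₁)) := by
  set P : ℝ → ℝ := fun x => x ^ 3 + (1 / 2) * x ^ 2 - (9 / 4) * x - 1 / 8 with hP
  have contP : Continuous P := by unfold P; continuity
  -- roots by IVT
  obtain ⟨a, ha, pa⟩ : ∃ r ∈ Set.Ioo (-2 : ℝ) (-1), P r = 0 := by
    have h0 : (0 : ℝ) ∈ Set.Ioo (P (-2)) (P (-1)) := by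
      constructor <;> (simp only [hP]; norm_num)
    obtain ⟨r, hr, hr0⟩ := intermediate_value_Ioo (by norm_num) contP.continuousOn h0
    exact ⟨r, hr, hr0⟩
  obtain ⟨b, hb, pb⟩ : ∃ r ∈ Set.Ioo (1 : ℝ) 2, P r = 0 := by
    have h0 : (0 : ℝ) ∈ Set.Ioo (P 1) (P 2) := by
      constructor <;> (simp only [hP]; norm_num)
    obtain ⟨r, hr, hr0⟩ := intermediate_value_Ioo (by norm_num) contP.continuousOn h0
    exact ⟨r, hr, hr0⟩
  obtain ⟨d, hd, pd⟩ : ∃ r ∈ Set.Ioo (-1 / 10 : ℝ) 0, P r = 0 := by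
    have h0 : (0 : ℝ) ∈ Set.Ioo (P 0) (P (-1 / 10)) := by
      constructor <;> (simp only [hP]; norm_num)
    obtain ⟨r, hr, hr0⟩ := intermediate_value_Ioo' (by norm_num) contP.continuousOn h0
    exact ⟨r, hr, hr0⟩
  have hab : a ≠ b := by intro h; rw [h] at ha; linarith [ha.2, hb.1]
  have had : a ≠ d := by intro h; rw [h] at ha; linarith [ha.2, hd.1]
  have hbd : b ≠ d := by intro h; rw [h] at hb; linarith [hb.1, hd.2]
  have hvieta := vieta a b d hab had hbd pa pb pd
  constructor
  · exact ⟨a, b, d, ha, hb, hd, hvieta⟩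
  · intro x₁ x₂ x₃
    constructor
    · rintro ⟨h12, h23, h13, e1, e2, e3⟩
      refine ⟨?_, e1, e2, e3⟩
      have r1 := cycle_root x₁ x₂ x₃ h12 e1 e2 e3
      have r2 := cycle_root x₂ x₃ x₁ h23 e2 e3 e1
      have r3 := cycle_root x₃ x₁ x₂ (Ne.symm h13) e3 e1 e2
      have m1 := (hvieta x₁).mp r1
      have m2 := (hvieta x₂).mp r2
      have m3 := (hvieta x₃).mp r3
      have hset : ({x₁, x₂, x₃} : Set ℝ) = {a, b, d} := by
        rcases m1 with rfl | rfl | rfl <;> rcases m2 with rfl | rfl | rfl <;>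
          rcases m3 with rfl | rfl | rfl <;>
          first
            | (exfalso; first | exact h12 rfl | exact h23 rfl | exact h13 rfl)
            | (ext x; simp only [Set.mem_insert_iff, Set.mem_singleton_iff]; try tauto)
      rw [hset]
      ext x
      simp only [Set.mem_insert_iff, Set.mem_singleton_iff, Set.mem_setOf_eq, hvieta x]
      try tauto
    · rintro ⟨hset, e1, e2, e3⟩
      have mem : ∀ y ∈ ({x₁, x₂, x₃} : Set ℝ),
          y ^ 3 + (1 / 2) * y ^ 2 - (9 / 4) * y - 1 / 8 = 0 := by
        intro y hy; rw [hset] at hy; exact hy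
      have r1 := mem x₁ (by simp)
      have r2 := mem x₂ (by simp)
      have r3 := mem x₃ (by simp)
      refine ⟨?_, ?_, ?_, e1, e2, e3⟩
      · intro h
        apply no_common x₁ r1
        linear_combination e1 - h
      · intro h
        apply no_common x₂ r2
        linear_combination e2 - h
      · intro h
        apply no_common x₃ r3
        linear_combination e3 + h
end

section
/- Let c < −7/4 be a real number and let (x₁, x₂, x₃) be a 3-cycle of f_c with x₁ + x₂ + x₃ = (−1 − √(−4c−7))/2. Then 8·x₁x₂x₃ > 1; consequently f_c'(x₁)·f_c'(x₂)·f_c'(x₃) > 1 and this 3-cycle is unstable. -/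
theorem stmt_13 (c x₁ x₂ x₃ : ℝ) (hc : c < -7 / 4)
    (hne₁₂ : x₁ ≠ x₂) (hne₂₃ : x₂ ≠ x₃) (hne₁₃ : x₁ ≠ x₃)
    (h₁ : x₁ ^ 2 + c = x₂) (h₂ : x₂ ^ 2 + c = x₃) (h₃ : x₃ ^ 2 + c = x₁)
    (hs : x₁ + x₂ + x₃ = (-1 - Real.sqrt (-4 * c - 7)) / 2) :
    1 < 8 * (x₁ * x₂ * x₃) ∧
    1 < deriv (fun x : ℝ => x ^ 2 + c) x₁ * deriv (fun x : ℝ => x ^ 2 + c) x₂ *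
          deriv (fun x : ℝ => x ^ 2 + c) x₃ ∧
    1 < |deriv (fun x : ℝ => x ^ 2 + c) x₁ * deriv (fun x : ℝ => x ^ 2 + c) x₂ *
          deriv (fun x : ℝ => x ^ 2 + c) x₃| := by
  have ht0 : (0:ℝ) < -4 * c - 7 := by linarith
  set t := Real.sqrt (-4 * c - 7) with htdef
  have ht2 : t ^ 2 = -4 * c - 7 := Real.sq_sqrt ht0.le
  have htpos : 0 < t := Real.sqrt_pos.2 ht0
  set s := x₁ + x₂ + x₃ with hsdef
  set q := x₁ * x₂ + x₂ * x₃ + x₃ * x₁ with hqdef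
  set p := x₁ * x₂ * x₃ with hpdef
  have hs2 : s ^ 2 + s + c + 2 = 0 := by
    rw [hs]; ring_nf; nlinarith [ht2]
  have hA : s ^ 2 - 2 * q + 3 * c = s := by
    simp only [hsdef, hqdef]; linear_combination h₁ + h₂ + h₃
  have hB : q = s ^ 3 - 3 * s * q + 3 * p + c * s := by
    simp only [hsdef, hqdef, hpdef]
    linear_combination -x₁ * h₁ - x₂ * h₂ - x₃ * h₃
  have hq : q = c - s - 1 := by linarith
  have hp : p = c * s + c + 1 := by
    linear_combination (-(1:ℝ)/3) * hB + ((1 + 3*s)/3) * hq - ((s + 2)/3) * hs2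
  have hp2 : 8 * p = 4 * c + 8 - 4 * (c * t) := by
    linear_combination 8 * hp + 8 * c * hs
  have h4c : t + 4 * c < 0 := by nlinarith [ht2, htpos, sq_nonneg (t + 4 * c)]
  have key : 1 < 8 * p := by
    nlinarith [hp2, ht2, mul_neg_of_pos_of_neg htpos h4c]
  have hd : ∀ x : ℝ, deriv (fun y : ℝ => y ^ 2 + c) x = 2 * x := by
    intro x
    simpa using (((hasDerivAt_pow 2 x).add_const c).deriv)
  refine ⟨key, ?_, ?_⟩
  · rw [hd, hd, hd]; nlinarith [key]
  · rw [hd, hd, hd]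
    calc (1:ℝ) < 2 * x₁ * (2 * x₂) * (2 * x₃) := by nlinarith [key]
    _ ≤ |2 * x₁ * (2 * x₂) * (2 * x₃)| := le_abs_self _
end

section
/- Let c̃ be the unique real root of 64c³ + 128c² + 72c + 81 and let c be a real number with c̃ < c < −7/4. Then any 3-cycle (x₁, x₂, x₃) of f_c with x₁ + x₂ + x₃ = (−1 + √(−4c−7))/2 satisfies −1 < 8·x₁x₂x₃ < 1; consequently |f_c'(x₁)·f_c'(x₂)·f_c'(x₃)| < 1 and this 3-cycle is asymptotically stable. -/
theorem stmt_15 (ctilde c x₁ x₂ x₃ : ℝ)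
    (hroot : 64 * ctilde ^ 3 + 128 * ctilde ^ 2 + 72 * ctilde + 81 = 0)
    (huniq : ∀ x : ℝ, 64 * x ^ 3 + 128 * x ^ 2 + 72 * x + 81 = 0 → x = ctilde)
    (hc₁ : ctilde < c) (hc₂ : c < -7 / 4)
    (hne₁₂ : x₁ ≠ x₂) (hne₂₃ : x₂ ≠ x₃) (hne₁₃ : x₁ ≠ x₃)
    (h₁ : x₁ ^ 2 + c = x₂) (h₂ : x₂ ^ 2 + c = x₃) (h₃ : x₃ ^ 2 + c = x₁)
    (hs : x₁ + x₂ + x₃ = (-1 + Real.sqrt (-4 * c - 7)) / 2) :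
    -1 < 8 * (x₁ * x₂ * x₃) ∧ 8 * (x₁ * x₂ * x₃) < 1 ∧
    |deriv (fun x : ℝ => x ^ 2 + c) x₁ * deriv (fun x : ℝ => x ^ 2 + c) x₂ *
        deriv (fun x : ℝ => x ^ 2 + c) x₃| < 1 := by
  set t := Real.sqrt (-4 * c - 7) with ht_def
  have hcpos : (0:ℝ) < -4 * c - 7 := by linarith
  have ht2 : t ^ 2 = -4 * c - 7 := Real.sq_sqrt hcpos.le
  have ht : 0 < t := Real.sqrt_pos.mpr hcpos
  set S := x₁ + x₂ + x₃ with hS_def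
  set s : ℝ := (-1 + t) / 2 with hs_def
  -- the key polynomial identity
  have key : 6 * (x₁ * x₂ * x₃) = s ^ 3 - 2 * s ^ 2 - s + 3 * c + 7 * c * s := by
    have hA : S = s := hs
    linear_combination (2*x₁ - (1 + 3*S)) * h₁ + (2*x₂ - (1 + 3*S)) * h₂ +
      (2*x₃ - (1 + 3*S)) * h₃ + (S^2 + S*s + s^2 - 2*(S + s) - 1 + 7*c) * hA
  have h8 : 8 * (x₁ * x₂ * x₃) = 1 - 7 * t - t ^ 2 - t ^ 3 := by
    linear_combination (4/3) * key + ((7*t - 1)/6) * ht2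
  -- positivity of the cubic at c
  have hpos : 0 < 64 * c ^ 3 + 128 * c ^ 2 + 72 * c + 81 := by
    by_contra hle
    push_neg at hle
    have hcont : ContinuousOn (fun x : ℝ => 64 * x ^ 3 + 128 * x ^ 2 + 72 * x + 81)
        (Set.Icc c (-7/4)) := by fun_prop
    have hsub := intermediate_value_Icc hc₂.le hcont
    have hmem : (0:ℝ) ∈ Set.Icc (64 * c ^ 3 + 128 * c ^ 2 + 72 * c + 81)
        (64 * (-7/4:ℝ) ^ 3 + 128 * (-7/4:ℝ) ^ 2 + 72 * (-7/4:ℝ) + 81) := by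
      constructor
      · exact hle
      · norm_num
    obtain ⟨y, hy, hy0⟩ := hsub hmem
    have := huniq y hy0
    have : ctilde < ctilde := lt_of_lt_of_le hc₁ (this ▸ hy.1)
    exact lt_irrefl _ this
  -- translate to t
  have hPt : 64 * c ^ 3 + 128 * c ^ 2 + 72 * c + 81
      = 4 - 53 * t ^ 2 - 13 * t ^ 4 - t ^ 6 := by
    linear_combination (16*c^2 - 4*t^2*c + 4*c + t^4 + 6*t^2 + 11) * ht2
  have ht6 : t ^ 6 + 13 * t ^ 4 + 53 * t ^ 2 < 4 := by
    rw [hPt] at hpos; linarith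
  have hfac2 : 0 < t ^ 3 - t ^ 2 + 7 * t + 2 := by
    nlinarith [sq_nonneg (t - 1), ht, sq_nonneg t]
  have hprod : (t ^ 3 + t ^ 2 + 7 * t - 2) * (t ^ 3 - t ^ 2 + 7 * t + 2) < 0 := by
    have : (t ^ 3 + t ^ 2 + 7 * t - 2) * (t ^ 3 - t ^ 2 + 7 * t + 2)
        = t ^ 6 + 13 * t ^ 4 + 53 * t ^ 2 - 4 := by ring
    rw [this]; linarith
  have hlt2 : t ^ 3 + t ^ 2 + 7 * t < 2 := by
    by_contra h
    push_neg at h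
    have h1 : 0 ≤ t ^ 3 + t ^ 2 + 7 * t - 2 := by linarith
    nlinarith [mul_nonneg h1 hfac2.le]
  have hgt0 : 0 < t ^ 3 + t ^ 2 + 7 * t := by positivity
  have hlow : -1 < 8 * (x₁ * x₂ * x₃) := by rw [h8]; linarith
  have hhigh : 8 * (x₁ * x₂ * x₃) < 1 := by rw [h8]; linarith
  refine ⟨hlow, hhigh, ?_⟩
  have hderiv : ∀ a : ℝ, deriv (fun x : ℝ => x ^ 2 + c) a = 2 * a := by
    intro a
    have : HasDerivAt (fun x : ℝ => x ^ 2 + c) (2 * a) a := by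
      simpa using ((hasDerivAt_pow 2 a).add_const c)
    exact this.deriv
  rw [hderiv, hderiv, hderiv, abs_lt]
  have heq : 2 * x₁ * (2 * x₂) * (2 * x₃) = 8 * (x₁ * x₂ * x₃) := by ring
  rw [heq]
  exact ⟨hlow, hhigh⟩
end

section
/- Let c̃ be the unique real root of 64c³ + 128c² + 72c + 81 and let c < c̃ be a real number. Then any 3-cycle (x₁, x₂, x₃) of f_c with x₁ + x₂ + x₃ = (−1 + √(−4c−7))/2 satisfies 8·x₁x₂x₃ < −1; consequently |f_c'(x₁)·f_c'(x₂)·f_c'(x₃)| > 1 and this 3-cycle is unstable, so for c < c̃ every 3-cycle of f_c is unstable. -/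
private lemma cubic_pos_s16 {x : ℝ} (hx : -7/4 ≤ x) :
    0 < 64 * x ^ 3 + 128 * x ^ 2 + 72 * x + 81 := by
  nlinarith [mul_nonneg (by linarith : (0:ℝ) ≤ x + 7/4) (sq_nonneg (8*x+1)), sq_nonneg (8*x+1)]

private lemma cubic_neg {x : ℝ} (hx : x ≤ -4) :
    64 * x ^ 3 + 128 * x ^ 2 + 72 * x + 81 < 0 := by
  nlinarith [mul_nonneg (by nlinarith : (0:ℝ) ≤ x^2 - 16) (by linarith : (0:ℝ) ≤ -(x+2))]

private lemma cycle_key (c x₁ x₂ x₃ : ℝ) (hc4 : c < -7/4)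
    (hp : 64 * c ^ 3 + 128 * c ^ 2 + 72 * c + 81 < 0)
    (h12 : x₁ ≠ x₂) (h23 : x₂ ≠ x₃) (h13 : x₁ ≠ x₃)
    (h1 : x₁ ^ 2 + c = x₂) (h2 : x₂ ^ 2 + c = x₃) (h3 : x₃ ^ 2 + c = x₁) :
    (x₁ + x₂ + x₃ = (-1 + Real.sqrt (-4 * c - 7)) / 2 → 8 * (x₁ * x₂ * x₃) < -1) ∧
      1 < |8 * (x₁ * x₂ * x₃)| := by
  set s : ℝ := x₁ + x₂ + x₃ with hs_def
  set d : ℝ := Real.sqrt (-4 * c - 7) with hd_def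
  have hDpos : (0:ℝ) < -4 * c - 7 := by linarith
  have hd2 : d ^ 2 = -4 * c - 7 := Real.sq_sqrt hDpos.le
  have hdpos : 0 < d := Real.sqrt_pos.mpr hDpos
  clear_value s d
  have ha : x₂ - x₃ = (x₁ - x₂) * (x₁ + x₂) := by linear_combination h2 - h1
  have hb : x₃ - x₁ = (x₂ - x₃) * (x₂ + x₃) := by linear_combination h3 - h2
  have hcc : x₁ - x₂ = (x₃ - x₁) * (x₃ + x₁) := by linear_combination h1 - h3
  have hne12 : x₁ - x₂ ≠ 0 := sub_ne_zero.mpr h12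
  have key : (x₁ - x₂) * ((x₁ + x₂) * (x₂ + x₃) * (x₃ + x₁)) = (x₁ - x₂) * 1 := by
    linear_combination (-1) * hcc - (x₃ + x₁) * hb - (x₂ + x₃) * (x₃ + x₁) * ha
  have hprod : (x₁ + x₂) * (x₂ + x₃) * (x₃ + x₁) = 1 := mul_left_cancel₀ hne12 key
  have e1 : s ^ 2 - 2 * (x₁*x₂ + x₂*x₃ + x₃*x₁) = s - 3 * c := by
    simp only [hs_def]; linear_combination h1 + h2 + h3
  have hq3eq : x₁ * x₂ * x₃ = s * (x₁*x₂ + x₂*x₃ + x₃*x₁) - 1 := by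
    simp only [hs_def]; linear_combination (-1) * hprod
  have e2 : x₁*x₂ + x₂*x₃ + x₃*x₁ = x₁^3 + x₂^3 + x₃^3 + c * s := by
    simp only [hs_def]; linear_combination (-x₁) * h1 - x₂ * h2 - x₃ * h3
  have e2' : x₁*x₂ + x₂*x₃ + x₃*x₁ = s ^ 3 + c * s - 3 := by
    simp only [hs_def] at *
    linear_combination e2 + 3 * hq3eq
  have hcubic : (2 * s - 3) * (s ^ 2 + s + c + 2) = 0 := by
    linear_combination (-1) * e1 - 2 * e2'
  rcases mul_eq_zero.mp hcubic with hs32 | hsq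
  · -- s = 3/2 case
    have hs32' : s = 3 / 2 := by linarith
    have hq3 : x₁ * x₂ * x₃ = 9 * c / 4 - 7 / 16 := by
      linear_combination hq3eq + (-3/4 : ℝ) * e1 +
        ((x₁*x₂ + x₂*x₃ + x₃*x₁) + (3/4) * s + 3/8) * hs32'
    have hlt : 8 * (x₁ * x₂ * x₃) < -1 := by rw [hq3]; linarith
    exact ⟨fun _ => hlt, lt_abs.mpr (Or.inr (by linarith))⟩
  · -- quadratic case: s² + s + c + 2 = 0
    have hq3 : x₁ * x₂ * x₃ = c * s + c + 1 := by
      linear_combination hq3eq + (-s/2) * e1 + (s/2 - 1) * hsq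
    have hfac : (2*s + 1 - d) * (2*s + 1 + d) = 0 := by
      linear_combination 4 * hsq - hd2
    rcases mul_eq_zero.mp hfac with hsd | hsd
    · -- 2s+1 = d  branch: 8 q3 = 4cd + 4c + 8 < -1
      have hsval : 2 * s + 1 = d := by linarith
      have h8 : 8 * (x₁ * x₂ * x₃) = 4 * c * d + 4 * c + 8 := by
        rw [hq3]; linear_combination 4 * c * hsval
      have hlt : 8 * (x₁ * x₂ * x₃) < -1 := by
        rw [h8]
        by_cases h9 : 4 * c + 9 ≤ 0
        · have : 4 * c * d < 0 := mul_neg_of_neg_of_pos (by linarith) hdpos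
          linarith
        · push_neg at h9
          by_contra hcon
          push_neg at hcon
          have hub : -(4 * c) * d ≤ 4 * c + 9 := by linarith
          have hnn : (0:ℝ) ≤ -(4 * c) * d :=
            le_of_lt (mul_pos (by linarith : (0:ℝ) < -(4 * c)) hdpos)
          have hsq2 : (-(4 * c) * d) * (-(4 * c) * d) ≤ (4*c+9) * (4*c+9) :=
            mul_self_le_mul_self hnn hub
          have hd2' : 16 * c ^ 2 * d ^ 2 = 16 * c ^ 2 * (-4 * c - 7) := by
            linear_combination 16 * c ^ 2 * hd2
          nlinarith [hsq2, hd2', hp]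
      exact ⟨fun _ => hlt, lt_abs.mpr (Or.inr (by linarith))⟩
    · -- 2s+1 = -d branch: 8 q3 = -4cd + 4c + 8 > 1
      have hsval : 2 * s + 1 = -d := by linarith
      have h8 : 8 * (x₁ * x₂ * x₃) = -(4 * c * d) + 4 * c + 8 := by
        rw [hq3]; linear_combination 4 * c * hsval
      have hb' : (0:ℝ) ≤ -(4 * c) := by linarith
      have hsqlt : d ^ 2 < (-(4 * c)) ^ 2 := by
        rw [hd2]; nlinarith [sq_nonneg (4 * c + 1/2)]
      have h4c : d < -(4 * c) := lt_of_pow_lt_pow_left₀ 2 hb' hsqlt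
      have hgt : 1 < 8 * (x₁ * x₂ * x₃) := by
        rw [h8]
        have hmul : d * d < -(4 * c) * d := mul_lt_mul_of_pos_right h4c hdpos
        have hdd : d * d = -4 * c - 7 := by rw [← hd2]; ring
        linarith [hmul, hdd]
      refine ⟨fun hsum => ?_, lt_abs.mpr (Or.inl hgt)⟩
      exfalso
      have : 2 * s + 1 = d := by rw [hsum]; ring
      linarith

private lemma deriv_sq_add (c x : ℝ) : deriv (fun y : ℝ => y ^ 2 + c) x = 2 * x := by
  simp [deriv_add_const, deriv_pow]

theorem stmt_16 (ctilde c : ℝ)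
    (hroot : 64 * ctilde ^ 3 + 128 * ctilde ^ 2 + 72 * ctilde + 81 = 0)
    (huniq : ∀ x : ℝ, 64 * x ^ 3 + 128 * x ^ 2 + 72 * x + 81 = 0 → x = ctilde)
    (hc : c < ctilde) :
    (∀ x₁ x₂ x₃ : ℝ, x₁ ≠ x₂ → x₂ ≠ x₃ → x₁ ≠ x₃ →
      x₁ ^ 2 + c = x₂ → x₂ ^ 2 + c = x₃ → x₃ ^ 2 + c = x₁ →
      x₁ + x₂ + x₃ = (-1 + Real.sqrt (-4 * c - 7)) / 2 →
      8 * (x₁ * x₂ * x₃) < -1 ∧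
        1 < |deriv (fun x : ℝ => x ^ 2 + c) x₁ * deriv (fun x : ℝ => x ^ 2 + c) x₂ *
              deriv (fun x : ℝ => x ^ 2 + c) x₃|) ∧
    (∀ x₁ x₂ x₃ : ℝ, x₁ ≠ x₂ → x₂ ≠ x₃ → x₁ ≠ x₃ →
      x₁ ^ 2 + c = x₂ → x₂ ^ 2 + c = x₃ → x₃ ^ 2 + c = x₁ →
      1 < |deriv (fun x : ℝ => x ^ 2 + c) x₁ * deriv (fun x : ℝ => x ^ 2 + c) x₂ *
            deriv (fun x : ℝ => x ^ 2 + c) x₃|) := by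
  have hct : ctilde < -7 / 4 := by
    by_contra h
    push_neg at h
    exact absurd hroot (ne_of_gt (cubic_pos_s16 h))
  have hc4 : c < -7 / 4 := lt_trans hc hct
  have hpc : 64 * c ^ 3 + 128 * c ^ 2 + 72 * c + 81 < 0 := by
    by_contra h
    push_neg at h
    rcases eq_or_lt_of_le h with heq | hlt
    · exact absurd (huniq c heq.symm) (ne_of_lt hc)
    · set a : ℝ := min (c - 1) (-4) with ha_def
      have ha1 : a ≤ c - 1 := min_le_left _ _
      have ha4 : a ≤ -4 := min_le_right _ _
      have hpa : 64 * a ^ 3 + 128 * a ^ 2 + 72 * a + 81 < 0 := cubic_neg ha4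
      have hcont : ContinuousOn (fun x : ℝ => 64 * x ^ 3 + 128 * x ^ 2 + 72 * x + 81)
          (Set.Icc a c) := by fun_prop
      have hiv := intermediate_value_Icc (by linarith : a ≤ c) hcont
      obtain ⟨x, hx, hfx⟩ := hiv ⟨hpa.le, hlt.le⟩
      have hxc : x = ctilde := huniq x hfx
      have : x ≤ c := hx.2
      linarith
  have hds : ∀ x₁ x₂ x₃ : ℝ,
      deriv (fun x : ℝ => x ^ 2 + c) x₁ * deriv (fun x : ℝ => x ^ 2 + c) x₂ *
        deriv (fun x : ℝ => x ^ 2 + c) x₃ = 8 * (x₁ * x₂ * x₃) := by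
    intro x₁ x₂ x₃
    rw [deriv_sq_add, deriv_sq_add, deriv_sq_add]; ring
  constructor
  · intro x₁ x₂ x₃ h12 h23 h13 h1 h2 h3 hsum
    obtain ⟨k1, k2⟩ := cycle_key c x₁ x₂ x₃ hc4 hpc h12 h23 h13 h1 h2 h3
    rw [hds]
    exact ⟨k1 hsum, k2⟩
  · intro x₁ x₂ x₃ h12 h23 h13 h1 h2 h3
    rw [hds]
    exact (cycle_key c x₁ x₂ x₃ hc4 hpc h12 h23 h13 h1 h2 h3).2
end

section
/- Let c = −7/4 and let (x₁, x₂, x₃) be the 3-cycle of f_c whose components are the roots of x³ + (1/2)x² − (9/4)x − 1/8 = 0, ordered with x₁ ∈ (−2, −1), x₂ ∈ (1, 2), x₃ ∈ (−1/10, 0). Then f_c'(x₁)·f_c'(x₂)·f_c'(x₃) = 8x₁x₂x₃ = 1, and the third iterate F = f_c ∘ f_c ∘ f_c satisfies F''(x₁) > 0, F''(x₂) < 0 and F''(x₃) < 0; in particular F''(x_i) ≠ 0 for i = 1, 2, 3, so this non-hyperbolic 3-cycle is unstable. -/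
/-!
The three points are distinct roots of the cubic, so Vieta gives `x₁ x₂ x₃ = 1/8`, and the
multiplier `2x₁ · 2x₂ · 2x₃` of the cycle equals `1`. By the chain rule `F''` is a polynomial of
degree six; modulo the cubic it reduces to `7 (4x² - 8x - 3)`, whose roots `1 ± √7 / 2` lie
outside the three isolating intervals, and the signs follow.
-/

theorem mul_mul_eq_neg_of_cubic_roots {R : Type*} [CommRing R] [IsDomain R] {p q r a b c : R}
    (hab : a ≠ b) (hac : a ≠ c) (hbc : b ≠ c)
    (ha : a ^ 3 + p * a ^ 2 + q * a + r = 0) (hb : b ^ 3 + p * b ^ 2 + q * b + r = 0)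
    (hc : c ^ 3 + p * c ^ 2 + q * c + r = 0) :
    a * b * c = -r := by
  have hab' : a ^ 2 + a * b + b ^ 2 + p * (a + b) + q = 0 := by
    apply mul_left_cancel₀ (sub_ne_zero.mpr hab)
    linear_combination ha - hb
  have hac' : a ^ 2 + a * c + c ^ 2 + p * (a + c) + q = 0 := by
    apply mul_left_cancel₀ (sub_ne_zero.mpr hac)
    linear_combination ha - hc
  have hsum : a + b + c = -p := by
    apply mul_left_cancel₀ (sub_ne_zero.mpr hbc)
    linear_combination hab' - hac'
  linear_combination (-c) * hab' + c * (a + b - c) * hsum + hc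

theorem HasDerivAt.sq_add_const {g : ℝ → ℝ} {g' x : ℝ} (c : ℝ) (hg : HasDerivAt g g' x) :
    HasDerivAt (fun y => g y ^ 2 + c) (2 * g x * g') x := by
  simpa using (hg.fun_pow 2).add_const c

theorem iteratedDeriv_two_quadratic_iterate_three (c x : ℝ) :
    iteratedDeriv 2 (fun x : ℝ => ((x ^ 2 + c) ^ 2 + c) ^ 2 + c) x =
      8 * ((3 * x ^ 2 + c) * ((x ^ 2 + c) ^ 2 + c) + 4 * x ^ 2 * (x ^ 2 + c) ^ 2) := by
  have hf₁ (y : ℝ) := (hasDerivAt_id' y).sq_add_const c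
  have hf₂ (y : ℝ) := (hf₁ y).sq_add_const c
  have hF : deriv (fun x : ℝ => ((x ^ 2 + c) ^ 2 + c) ^ 2 + c) =
      fun x => 8 * x * (x ^ 2 + c) * ((x ^ 2 + c) ^ 2 + c) := by
    funext y
    rw [((hf₂ y).sq_add_const c).deriv]
    ring
  rw [iteratedDeriv_succ, iteratedDeriv_one, hF,
    ((((hasDerivAt_id' x).const_mul 8).fun_mul (hf₁ x)).fun_mul (hf₂ x)).deriv]
  ring

theorem iteratedDeriv_two_quadratic_iterate_three_of_root {x : ℝ}
    (hx : x ^ 3 + (1 / 2) * x ^ 2 - (9 / 4) * x - 1 / 8 = 0) :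
    iteratedDeriv 2 (fun x : ℝ => ((x ^ 2 + (-7 / 4)) ^ 2 + (-7 / 4)) ^ 2 + (-7 / 4)) x =
      7 * (4 * x ^ 2 - 8 * x - 3) := by
  rw [iteratedDeriv_two_quadratic_iterate_three]
  linear_combination (56 * x ^ 3 - 28 * x ^ 2 - 70 * x - 21) * hx

theorem stmt_17_general (x₁ x₂ x₃ : ℝ)
    (hr₁ : x₁ ^ 3 + (1 / 2) * x₁ ^ 2 - (9 / 4) * x₁ - 1 / 8 = 0)
    (hr₂ : x₂ ^ 3 + (1 / 2) * x₂ ^ 2 - (9 / 4) * x₂ - 1 / 8 = 0)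
    (hr₃ : x₃ ^ 3 + (1 / 2) * x₃ ^ 2 - (9 / 4) * x₃ - 1 / 8 = 0)
    (hI₁ : x₁ ∈ Set.Ioo (-2 : ℝ) (-1)) (hI₂ : x₂ ∈ Set.Ioo (1 : ℝ) 2)
    (hI₃ : x₃ ∈ Set.Ioo (-1 / 10 : ℝ) 0) :
    8 * (x₁ * x₂ * x₃) = 1 ∧
    deriv (fun x : ℝ => x ^ 2 + (-7 / 4)) x₁ * deriv (fun x : ℝ => x ^ 2 + (-7 / 4)) x₂ *
      deriv (fun x : ℝ => x ^ 2 + (-7 / 4)) x₃ = 1 ∧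
    0 < iteratedDeriv 2
        (fun x : ℝ => ((x ^ 2 + (-7 / 4)) ^ 2 + (-7 / 4)) ^ 2 + (-7 / 4)) x₁ ∧
    iteratedDeriv 2
        (fun x : ℝ => ((x ^ 2 + (-7 / 4)) ^ 2 + (-7 / 4)) ^ 2 + (-7 / 4)) x₂ < 0 ∧
    iteratedDeriv 2
        (fun x : ℝ => ((x ^ 2 + (-7 / 4)) ^ 2 + (-7 / 4)) ^ 2 + (-7 / 4)) x₃ < 0 := by
  obtain ⟨hx₁l, hx₁r⟩ := hI₁
  obtain ⟨hx₂l, hx₂r⟩ := hI₂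
  obtain ⟨hx₃l, hx₃r⟩ := hI₃
  have hprod : x₁ * x₂ * x₃ = -(-1 / 8) :=
    mul_mul_eq_neg_of_cubic_roots (p := 1 / 2) (q := -9 / 4) (by linarith) (by linarith)
      (by linarith) (by linear_combination hr₁) (by linear_combination hr₂)
      (by linear_combination hr₃)
  have hf' (y : ℝ) : deriv (fun x : ℝ => x ^ 2 + (-7 / 4)) y = 2 * y := by
    rw [((hasDerivAt_id' y).sq_add_const _).deriv, mul_one]
  rw [hf', hf', hf', iteratedDeriv_two_quadratic_iterate_three_of_root hr₁,
    iteratedDeriv_two_quadratic_iterate_three_of_root hr₂,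
    iteratedDeriv_two_quadratic_iterate_three_of_root hr₃]
  refine ⟨by linear_combination 8 * hprod, by linear_combination 8 * hprod, ?_, ?_, ?_⟩ <;>
    nlinarith

theorem stmt_17 (x₁ x₂ x₃ : ℝ)
    (hr₁ : x₁ ^ 3 + (1 / 2) * x₁ ^ 2 - (9 / 4) * x₁ - 1 / 8 = 0)
    (hr₂ : x₂ ^ 3 + (1 / 2) * x₂ ^ 2 - (9 / 4) * x₂ - 1 / 8 = 0)
    (hr₃ : x₃ ^ 3 + (1 / 2) * x₃ ^ 2 - (9 / 4) * x₃ - 1 / 8 = 0)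
    (hI₁ : x₁ ∈ Set.Ioo (-2 : ℝ) (-1)) (hI₂ : x₂ ∈ Set.Ioo (1 : ℝ) 2)
    (hI₃ : x₃ ∈ Set.Ioo (-1 / 10 : ℝ) 0)
    (h₁ : x₁ ^ 2 + (-7 / 4) = x₂) (h₂ : x₂ ^ 2 + (-7 / 4) = x₃)
    (h₃ : x₃ ^ 2 + (-7 / 4) = x₁) :
    8 * (x₁ * x₂ * x₃) = 1 ∧
    deriv (fun x : ℝ => x ^ 2 + (-7 / 4)) x₁ * deriv (fun x : ℝ => x ^ 2 + (-7 / 4)) x₂ *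
      deriv (fun x : ℝ => x ^ 2 + (-7 / 4)) x₃ = 1 ∧
    0 < iteratedDeriv 2
        (fun x : ℝ => ((x ^ 2 + (-7 / 4)) ^ 2 + (-7 / 4)) ^ 2 + (-7 / 4)) x₁ ∧
    iteratedDeriv 2
        (fun x : ℝ => ((x ^ 2 + (-7 / 4)) ^ 2 + (-7 / 4)) ^ 2 + (-7 / 4)) x₂ < 0 ∧
    iteratedDeriv 2
        (fun x : ℝ => ((x ^ 2 + (-7 / 4)) ^ 2 + (-7 / 4)) ^ 2 + (-7 / 4)) x₃ < 0 :=
  stmt_17_general x₁ x₂ x₃ hr₁ hr₂ hr₃ hI₁ hI₂ hI₃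
end

section
/- Let r be a nonzero real number. Then the logistic map g_r(y) = r·y·(1−y) has a 3-cycle if and only if r ≤ 1 − 2√2 or r ≥ 1 + 2√2. -/
/-!
Under the affine change of variables `x = r/2 - r y` the logistic map `g_r` becomes
`x ↦ x² + c` with `c = r/2 - r²/4`, so it suffices to show that `x ↦ x² + c` has a 3-cycle
exactly when `c ≤ -7/4`; for `c = r/2 - r²/4` this reads `(r - 1)² ≥ 8`.

If `(a, b, d)` is a 3-cycle of `x ↦ x² + c`, subtracting the cycle equations pairwise and
cancelling the nonzero differences shows that `σ = a + b + d` satisfies `σ² + σ + c + 2 = 0`,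
whose discriminant is `-4c - 7`. Conversely, a real root `σ` of that quadratic determines the
elementary symmetric functions of a would-be cycle, hence the cubic
`x³ - σx² + (c - σ - 1)x - (c(σ + 1) + 1)` vanishing on it; any real root of that cubic has
period three.
-/

open Function Polynomial

def IsThreeCycle {α : Type*} (f : α → α) (a b c : α) : Prop :=
  a ≠ b ∧ b ≠ c ∧ a ≠ c ∧ f a = b ∧ f b = c ∧ f c = a

section ThreeCycle

variable {α β : Type*} {f : α → α} {g : β → β}

theorem IsThreeCycle.map {φ : α → β} (hφ : Injective φ) (h : Semiconj φ f g) {a b c : α}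
    (hcyc : IsThreeCycle f a b c) : IsThreeCycle g (φ a) (φ b) (φ c) := by
  obtain ⟨hab, hbc, hac, rfl, rfl, hc⟩ := hcyc
  exact ⟨hφ.ne hab, hφ.ne hbc, hφ.ne hac, (h a).symm, (h (f a)).symm, by rw [← h, hc]⟩

theorem Function.Semiconj.exists_isThreeCycle_iff (e : α ≃ β) (h : Semiconj e f g) :
    (∃ a b c, IsThreeCycle f a b c) ↔ ∃ a b c, IsThreeCycle g a b c :=
  ⟨fun ⟨_, _, _, hcyc⟩ => ⟨_, _, _, hcyc.map e.injective h⟩,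
    fun ⟨_, _, _, hcyc⟩ =>
      ⟨_, _, _, hcyc.map e.symm.injective (h.inverse_left e.left_inv e.right_inv)⟩⟩

theorem isThreeCycle_of_iterate_eq {a : α} (h3 : f (f (f a)) = a) (h1 : f a ≠ a) :
    IsThreeCycle f a (f a) (f (f a)) := by
  refine ⟨h1.symm, fun h => h1 ?_, fun h => h1 ?_, rfl, rfl, h3⟩
  · rwa [← h, ← h] at h3
  · rwa [← h] at h3

end ThreeCycle

theorem exists_pos_monic_cubic (p q t : ℝ) : ∃ x : ℝ, 0 < x ^ 3 + p * x ^ 2 + q * x + t := by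
  have hmonic : (X ^ 3 + C p * X ^ 2 + C q * X + C t).Monic := by monicity!
  have hdeg : (X ^ 3 + C p * X ^ 2 + C q * X + C t).natDegree = 3 := by compute_degree!
  have htop := (X ^ 3 + C p * X ^ 2 + C q * X + C t).tendsto_atTop_of_leadingCoeff_nonneg
    (by rw [degree_eq_natDegree hmonic.ne_zero, hdeg]; norm_num)
    (by rw [hmonic.leadingCoeff]; norm_num)
  obtain ⟨x, hx⟩ := (htop.eventually_gt_atTop 0).exists
  exact ⟨x, by simpa using hx⟩

theorem exists_root_monic_cubic (p q t : ℝ) : ∃ x : ℝ, x ^ 3 + p * x ^ 2 + q * x + t = 0 := by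
  obtain ⟨u, hu⟩ := exists_pos_monic_cubic p q t
  obtain ⟨v, hv⟩ := exists_pos_monic_cubic (-p) q (-t)
  have hzero : (0 : ℝ) ∈ Set.Icc ((-v) ^ 3 + p * (-v) ^ 2 + q * (-v) + t)
      (u ^ 3 + p * u ^ 2 + q * u + t) := ⟨by linarith, hu.le⟩
  exact intermediate_value_univ (-v) u (by fun_prop) hzero

section QuadraticFamily

variable {c : ℝ}

theorem IsThreeCycle.sum_sq_add_sum_add {a b d : ℝ} (h : IsThreeCycle (fun x => x ^ 2 + c) a b d) :
    (a + b + d) ^ 2 + (a + b + d) + c + 2 = 0 := by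
  obtain ⟨hab, hbd, had, h1, h2, h3⟩ := h
  -- `b - d = (a - b)(a + b)`, `d - a = (b - d)(b + d)`, and the three differences sum to zero
  have e1 : (a - b) * (1 + (a + b) + (a + b) * (b + d)) = 0 := by
    linear_combination (1 + b + d) * h1 - (b + d) * h2 - h3
  have e2 : (b - d) * (1 + (b + d) + (b + d) * (d + a)) = 0 := by
    linear_combination (1 + d + a) * h2 - (d + a) * h3 - h1
  have e3 : (d - a) * (1 + (d + a) + (d + a) * (a + b)) = 0 := by
    linear_combination (1 + a + b) * h3 - (a + b) * h1 - h2
  have R1 := (mul_eq_zero.mp e1).resolve_left (sub_ne_zero.mpr hab)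
  have R2 := (mul_eq_zero.mp e2).resolve_left (sub_ne_zero.mpr hbd)
  have R3 := (mul_eq_zero.mp e3).resolve_left (sub_ne_zero.mpr had.symm)
  linear_combination (2 / 3) * (R1 + R2 + R3) + (1 / 3) * (h1 + h2 + h3)

theorem IsThreeCycle.le_neg_seven_div_four {a b d : ℝ}
    (h : IsThreeCycle (fun x => x ^ 2 + c) a b d) : c ≤ -7 / 4 := by
  nlinarith [h.sum_sq_add_sum_add, sq_nonneg (2 * (a + b + d) + 1)]

theorem exists_isThreeCycle_sq_add (hc : c ≤ -7 / 4) :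
    ∃ a b d, IsThreeCycle (fun x => x ^ 2 + c) a b d := by
  obtain ⟨s, hs⟩ : ∃ s : ℝ, s ^ 2 + s + c + 2 = 0 := by
    refine ⟨(-1 + √(-4 * c - 7)) / 2, ?_⟩
    linear_combination (1 / 4) * Real.sq_sqrt (by linarith : 0 ≤ -4 * c - 7)
  obtain ⟨a, ha⟩ := exists_root_monic_cubic (-s) (c - s - 1) (-(c * (s + 1) + 1))
  have hperiod : ((a ^ 2 + c) ^ 2 + c) ^ 2 + c = a := by
    linear_combination ((a ^ 2 - a + c) * (a ^ 3 + (1 + s) * a ^ 2 + (c + s) * a + (c * s - 1))) * ha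
      + (a ^ 6 + a ^ 5 + (3 * c - 1) * a ^ 4 + (2 * c - 1) * a ^ 3 + (3 * c ^ 2 - c) * a ^ 2
        + c ^ 2 * a + c ^ 3) * hs
  have hnot_fixed : a ^ 2 + c ≠ a := by
    intro hfix
    have h1 : 2 * s * a + 2 * c + 1 = 0 := by linear_combination -ha + (a + 1 - s) * hfix
    have h2 : 2 * s - 4 * c + 1 = 0 := by
      linear_combination 4 * s ^ 2 * hfix + (2 * s - 2 * s * a + 2 * c + 1) * h1 - 4 * c * hs
    nlinarith [sq_nonneg (4 * c + 1 / 2)]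
  exact ⟨_, _, _, isThreeCycle_of_iterate_eq hperiod hnot_fixed⟩

end QuadraticFamily

noncomputable def logisticConjEquiv (r : ℝ) (hr : r ≠ 0) : ℝ ≃ ℝ where
  toFun y := r / 2 - r * y
  invFun x := 1 / 2 - x / r
  left_inv y := by field_simp; ring
  right_inv x := by field_simp; ring

theorem semiconj_logisticConjEquiv (r : ℝ) (hr : r ≠ 0) :
    Semiconj (logisticConjEquiv r hr) (fun y => r * y * (1 - y))
      (fun x => x ^ 2 + (r / 2 - r ^ 2 / 4)) := fun y => by
  simp only [logisticConjEquiv, Equiv.coe_fn_mk]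
  ring

theorem eight_le_sub_one_sq_iff (r : ℝ) : 8 ≤ (r - 1) ^ 2 ↔ r ≤ 1 - 2 * √2 ∨ 1 + 2 * √2 ≤ r := by
  have hsqrt8 : √8 = 2 * √2 := by
    rw [show (8 : ℝ) = 2 ^ 2 * 2 by norm_num, Real.sqrt_mul' _ zero_le_two,
      Real.sqrt_sq zero_le_two]
  rw [← Real.sqrt_le_sqrt_iff (sq_nonneg _), Real.sqrt_sq_eq_abs, hsqrt8, le_abs']
  constructor <;> rintro (h | h) <;> [left; right; left; right] <;> linarith

theorem stmt_19 (r : ℝ) (hr : r ≠ 0) :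
    (∃ y₁ y₂ y₃ : ℝ, y₁ ≠ y₂ ∧ y₂ ≠ y₃ ∧ y₁ ≠ y₃ ∧
      r * y₁ * (1 - y₁) = y₂ ∧ r * y₂ * (1 - y₂) = y₃ ∧ r * y₃ * (1 - y₃) = y₁) ↔
    (r ≤ 1 - 2 * Real.sqrt 2 ∨ 1 + 2 * Real.sqrt 2 ≤ r) :=
  calc (∃ y₁ y₂ y₃, IsThreeCycle (fun y => r * y * (1 - y)) y₁ y₂ y₃)
      ↔ ∃ a b d, IsThreeCycle (fun x => x ^ 2 + (r / 2 - r ^ 2 / 4)) a b d :=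
        (semiconj_logisticConjEquiv r hr).exists_isThreeCycle_iff
    _ ↔ r / 2 - r ^ 2 / 4 ≤ -7 / 4 :=
        ⟨fun ⟨_, _, _, h⟩ => h.le_neg_seven_div_four, exists_isThreeCycle_sq_add⟩
    _ ↔ 8 ≤ (r - 1) ^ 2 := by constructor <;> intro h <;> linarith
    _ ↔ _ := eight_le_sub_one_sq_iff r
end
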